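/- arXiv:2112.01685 — 14 statements merged into one kernel-verified Lean document; each statement's English description precedes it below -/
import Mathlib

section
/- Let G be a finite simple graph and S ⊆ V(G). Then the following are equivalent: (i) for every set F ⊆ S with |F| ≤ 1, the set S \ F is an identifying code of G (i.e., S is a redundant identifying code in the fault-tolerance sense); (ii) every vertex of G is at least 2-dominated by S and every pair of distinct vertices of G is 2-distinguished by S. -/
open scoped symmDiff

variable {V : Type*}

/-- The closed neighborhood of a vertex. -/
def closedNbhd (G : SimpleGraph V) (v : V) : Set V := insert v (G.neighborSet v)

/-- A vertex `v` is at least `k`-dominated by `S`. -/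
def kDominated (G : SimpleGraph V) (S : Set V) (k : ℕ) (v : V) : Prop :=
  k ≤ (closedNbhd G v ∩ S).ncard

/-- Two vertices `u` and `v` are `k`-distinguished by `S`. -/
def kDistinguished (G : SimpleGraph V) (S : Set V) (k : ℕ) (u v : V) : Prop :=
  k ≤ ((closedNbhd G u ∩ S) ∆ (closedNbhd G v ∩ S)).ncard

/-- `S` is an identifying code of `G`. -/
def IsIC (G : SimpleGraph V) (S : Set V) : Prop :=
  (∀ v, kDominated G S 1 v) ∧ ∀ u v, u ≠ v → kDistinguished G S 1 u v

/-- `S` is a redundant identifying code of `G`. -/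
def IsRedIC (G : SimpleGraph V) (S : Set V) : Prop :=
  (∀ v, kDominated G S 2 v) ∧ ∀ u v, u ≠ v → kDistinguished G S 2 u v

/-- The minimum cardinality of a redundant identifying code of `G`. -/
noncomputable def redIC (G : SimpleGraph V) : ℕ :=
  sInf {n | ∃ S : Set V, IsRedIC G S ∧ S.ncard = n}

/-- The degree of a vertex, as the cardinality of its open neighborhood. -/
noncomputable def deg (G : SimpleGraph V) (v : V) : ℕ := (G.neighborSet v).ncard

/-- A leaf is a vertex of degree 1. -/
def IsLeaf (G : SimpleGraph V) (v : V) : Prop := deg G v = 1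

/-- A support vertex is a vertex adjacent to a leaf. -/
def IsSupport (G : SimpleGraph V) (v : V) : Prop := ∃ u, G.Adj v u ∧ IsLeaf G u

/-- Two distinct vertices are closed twins if they have the same closed neighborhood. -/
def ClosedTwins (G : SimpleGraph V) (u v : V) : Prop :=
  u ≠ v ∧ closedNbhd G u = closedNbhd G v

/-- `S` is fault-tolerant (removing any at most one detector leaves an
identifying code) iff every vertex is at least 2-dominated and every pair of distinct
vertices is 2-distinguished. -/
theorem stmt_0 {V : Type*} [Fintype V] (G : SimpleGraph V) (S : Set V) :
    (∀ F : Set V, F ⊆ S → F.ncard ≤ 1 → IsIC G (S \ F)) ↔ IsRedIC G S := by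
  have hinter : ∀ (A F : Set V), A ∩ (S \ F) = (A ∩ S) \ F := by
    intro A F; ext x; simp [Set.mem_diff]; tauto
  have hsymm : ∀ (A B F : Set V), (A \ F) ∆ (B \ F) = (A ∆ B) \ F := by
    intro A B F; ext x; simp [Set.mem_symmDiff, Set.mem_diff]; tauto
  have hcard : ∀ (T F : Set V), T.ncard ≤ (T \ F).ncard + F.ncard := by
    intro T F
    calc T.ncard ≤ ((T \ F) ∪ F).ncard := by
          apply Set.ncard_le_ncard _ (Set.toFinite _)
          intro x hx
          by_cases hF : x ∈ F
          · exact Or.inr hF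
          · exact Or.inl ⟨hx, hF⟩
      _ ≤ (T \ F).ncard + F.ncard := Set.ncard_union_le _ _
  constructor
  · intro h
    constructor
    · intro v
      by_contra hv
      unfold kDominated at hv
      push_neg at hv
      have h0 := (h ∅ (by simp) (by simp)).1 v
      unfold kDominated at h0
      rw [Set.diff_empty] at h0
      have : (closedNbhd G v ∩ S).ncard = 1 := by omega
      obtain ⟨w, hw⟩ := Set.ncard_eq_one.mp this
      have hwS : w ∈ S := by
        have : w ∈ closedNbhd G v ∩ S := hw ▸ rfl
        exact this.2
      have h1 := (h {w} (by simpa) (by simp)).1 v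
      unfold kDominated at h1
      rw [hinter, hw] at h1
      simp at h1
    · intro u v huv
      by_contra hd
      unfold kDistinguished at hd
      push_neg at hd
      have h0 := (h ∅ (by simp) (by simp)).2 u v huv
      unfold kDistinguished at h0
      rw [Set.diff_empty] at h0
      have : ((closedNbhd G u ∩ S) ∆ (closedNbhd G v ∩ S)).ncard = 1 := by omega
      obtain ⟨w, hw⟩ := Set.ncard_eq_one.mp this
      have hwS : w ∈ S := by
        have hmem : w ∈ (closedNbhd G u ∩ S) ∆ (closedNbhd G v ∩ S) := hw ▸ rfl
        rcases Set.mem_symmDiff.mp hmem with ⟨⟨_, hS⟩, _⟩ | ⟨⟨_, hS⟩, _⟩ <;> exact hS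
      have h1 := (h {w} (by simpa) (by simp)).2 u v huv
      unfold kDistinguished at h1
      rw [hinter, hinter, hsymm, hw] at h1
      simp at h1
  · intro ⟨hdom, hdist⟩ F hFS hF1
    constructor
    · intro v
      have := hdom v
      unfold kDominated at *
      rw [hinter]
      have := hcard (closedNbhd G v ∩ S) F
      omega
    · intro u v huv
      have := hdist u v huv
      unfold kDistinguished at *
      rw [hinter, hinter, hsymm]
      have := hcard ((closedNbhd G u ∩ S) ∆ (closedNbhd G v ∩ S)) F
      omega
end

section
/- Let G be a finite simple graph. If G admits a redundant identifying code, then G has no closed twins and every support vertex of G has degree at least 3. -/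
open scoped symmDiff

variable {V : Type*}

theorem stmt_1 {V : Type*} [Fintype V] (G : SimpleGraph V)
    (h : ∃ S : Set V, IsRedIC G S) :
    (∀ u v : V, ¬ ClosedTwins G u v) ∧ (∀ v : V, IsSupport G v → 3 ≤ deg G v) := by
  obtain ⟨S, hdom, hdist⟩ := h
  constructor
  · rintro u v ⟨hne, heq⟩
    have h2 := hdist u v hne
    simp only [kDistinguished, heq, symmDiff_self] at h2
    simp [Set.ncard_empty] at h2
  · rintro v ⟨u, hadj, hleaf⟩
    have huv : u ≠ v := G.ne_of_adj hadj.symm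
    have hNu : G.neighborSet u = {v} := by
      obtain ⟨a, ha⟩ := Set.ncard_eq_one.mp hleaf
      have hmem : v ∈ G.neighborSet u := hadj.symm
      rw [ha] at hmem ⊢
      simp at hmem; simp [hmem]
    have hsub : closedNbhd G u ⊆ closedNbhd G v := by
      intro x hx
      rcases Set.mem_insert_iff.mp hx with rfl | hx'
      · exact Set.mem_insert_iff.mpr (Or.inr hadj)
      · rw [hNu] at hx'
        rcases hx' with rfl
        exact Set.mem_insert _ _
    have h2 := hdist u v huv
    unfold kDistinguished at h2
    have hsd : (closedNbhd G u ∩ S) ∆ (closedNbhd G v ∩ S) ⊆ G.neighborSet v \ {u} := by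
      intro x hx
      rw [Set.symmDiff_def] at hx
      rcases hx with ⟨hx1, hx2⟩ | ⟨hx1, hx2⟩
      · exact absurd ⟨hsub hx1.1, hx1.2⟩ hx2
      · have hxnu : x ∉ closedNbhd G u := fun hc => hx2 ⟨hc, hx1.2⟩
        constructor
        · rcases Set.mem_insert_iff.mp hx1.1 with rfl | hxv'
          · exact absurd (show x ∈ closedNbhd G u by simp [closedNbhd, hNu]) hxnu
          · exact hxv'
        · intro hc
          rcases hc with rfl
          exact hxnu (Set.mem_insert _ _)
    have hle : 2 ≤ (G.neighborSet v \ {u}).ncard :=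
      le_trans h2 (Set.ncard_le_ncard hsd (Set.toFinite _))
    have hu : u ∈ G.neighborSet v := hadj
    have hcard : (G.neighborSet v \ {u}).ncard + 1 = (G.neighborSet v).ncard :=
      Set.ncard_diff_singleton_add_one hu (Set.toFinite _)
    unfold deg
    omega
end

section
/- Let G be a finite connected simple graph with at least 4 vertices. Then G admits a redundant identifying code if and only if G has no closed twins, every support vertex of G has degree at least 3, and for every triangle with vertices a, b, c in G, each pair of its vertices u, v satisfies |N[u] Δ N[v]| ≥ 2. Moreover, when these conditions hold, the full vertex set V(G) is a redundant identifying code. -/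
open scoped symmDiff

variable {V : Type*}

/- ===== auxiliary lemmas ===== -/


lemma mem_closedNbhd' {G : SimpleGraph V} {u v : V} :
    u ∈ closedNbhd G v ↔ u = v ∨ G.Adj v u := by
  simp [closedNbhd]

lemma two_le_ncard_of_mem [Fintype V] {s : Set V} {a b : V} (ha : a ∈ s) (hb : b ∈ s)
    (hab : a ≠ b) : 2 ≤ s.ncard := by
  have h : 1 < s.ncard := (Set.one_lt_ncard (Set.toFinite s)).2 ⟨a, ha, b, hb, hab⟩
  omega

lemma symmdiff_inter_subset {A B S : Set V} :
    (A ∩ S) ∆ (B ∩ S) ⊆ A ∆ B := by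
  intro x hx
  simp only [Set.mem_symmDiff, Set.mem_inter_iff] at hx ⊢
  tauto

lemma nec_distinct [Fintype V] {G : SimpleGraph V} {S : Set V} (h : IsRedIC G S) :
    ∀ u v : V, u ≠ v → 2 ≤ (closedNbhd G u ∆ closedNbhd G v).ncard := by
  intro u v huv
  have h2 := h.2 u v huv
  exact le_trans h2 (Set.ncard_le_ncard symmdiff_inter_subset (Set.toFinite _))

lemma leaf_closedNbhd [Fintype V] {G : SimpleGraph V} {u v : V} (huv : G.Adj v u)
    (hleaf : IsLeaf G u) : closedNbhd G u = {u, v} := by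
  obtain ⟨a, ha⟩ := Set.ncard_eq_one.mp hleaf
  have hv : v ∈ G.neighborSet u := huv.symm
  rw [ha] at hv
  rw [Set.mem_singleton_iff] at hv
  subst hv
  rw [closedNbhd, ha]

lemma key [Fintype V] {G : SimpleGraph V}
    (hS : ∀ v, IsSupport G v → 3 ≤ deg G v)
    (hT : ∀ a b c : V, G.Adj a b → G.Adj b c → G.Adj a c →
      2 ≤ (closedNbhd G a ∆ closedNbhd G b).ncard)
    {u v w : V} (huv : G.Adj u v) (hwu : w ∈ closedNbhd G u)
    (hwv : w ∉ closedNbhd G v) :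
    2 ≤ (closedNbhd G u ∆ closedNbhd G v).ncard := by
  have hwnv : w ≠ v := fun h => hwv (h ▸ mem_closedNbhd'.2 (Or.inl rfl))
  have hwnu : w ≠ u := by
    rintro rfl; exact hwv (mem_closedNbhd'.2 (Or.inr huv.symm))
  have hwmem : w ∈ closedNbhd G u ∆ closedNbhd G v :=
    Set.mem_symmDiff.2 (Or.inl ⟨hwu, hwv⟩)
  by_cases hx : ∃ x, x ≠ u ∧ x ≠ v ∧ x ∈ closedNbhd G u ∧ x ∈ closedNbhd G v
  · obtain ⟨x, hxu, hxv, h1, h2⟩ := hx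
    have hvx : G.Adj v x := (mem_closedNbhd'.1 h2).resolve_left hxv
    have hux : G.Adj u x := (mem_closedNbhd'.1 h1).resolve_left hxu
    exact hT u v x huv hvx hux
  · push_neg at hx
    by_cases hy : ∃ y, y ∈ closedNbhd G v ∧ y ∉ closedNbhd G u
    · obtain ⟨y, hy1, hy2⟩ := hy
      have hymem : y ∈ closedNbhd G u ∆ closedNbhd G v :=
        Set.mem_symmDiff.2 (Or.inr ⟨hy1, hy2⟩)
      exact two_le_ncard_of_mem hwmem hymem (fun h => hy2 (h ▸ hwu))
    · push_neg at hy
      have hNv : closedNbhd G v = {u, v} := by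
        apply Set.Subset.antisymm
        · intro x hxv
          by_contra hmem
          simp only [Set.mem_insert_iff, Set.mem_singleton_iff, not_or] at hmem
          exact hx x hmem.1 hmem.2 (hy x hxv) hxv
        · rintro x (rfl | rfl)
          · exact mem_closedNbhd'.2 (Or.inr huv.symm)
          · exact mem_closedNbhd'.2 (Or.inl rfl)
      have hNv' : G.neighborSet v = {u} := by
        have h1 : G.neighborSet v = closedNbhd G v \ {v} := by
          ext x
          simp only [closedNbhd, Set.mem_diff, Set.mem_insert_iff, Set.mem_singleton_iff,
            SimpleGraph.mem_neighborSet]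
          constructor
          · intro h; exact ⟨Or.inr h, fun hh => G.irrefl (hh ▸ h)⟩
          · rintro ⟨h | h, h2⟩
            · exact absurd h h2
            · exact h
        rw [h1, hNv]
        ext x
        simp only [Set.mem_diff, Set.mem_insert_iff, Set.mem_singleton_iff]
        constructor
        · rintro ⟨h | h, h2⟩ <;> tauto
        · rintro rfl; exact ⟨Or.inl rfl, huv.ne⟩
      have hleaf : IsLeaf G v := by
        simp [IsLeaf, deg, hNv']
      have h3 : 3 ≤ deg G u := hS u ⟨v, huv, hleaf⟩
      have hz : ¬ (G.neighborSet u ⊆ {v, w}) := by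
        intro hsub
        have := Set.ncard_le_ncard hsub (Set.toFinite _)
        have h2 : ({v, w} : Set V).ncard ≤ 2 := by
          apply le_trans (Set.ncard_insert_le _ _)
          simp
        unfold deg at h3
        omega
      rw [Set.not_subset] at hz
      obtain ⟨z, hz1, hz2⟩ := hz
      simp only [Set.mem_insert_iff, Set.mem_singleton_iff, not_or] at hz2
      have hznu : z ≠ u := fun h => G.irrefl (h ▸ hz1)
      have hzmem : z ∈ closedNbhd G u ∆ closedNbhd G v := by
        apply Set.mem_symmDiff.2
        left
        refine ⟨mem_closedNbhd'.2 (Or.inr hz1), ?_⟩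
        rw [hNv]
        simp only [Set.mem_insert_iff, Set.mem_singleton_iff, not_or]
        exact ⟨hznu, hz2.1⟩
      exact two_le_ncard_of_mem hwmem hzmem (Ne.symm hz2.2)

lemma univ_red [Fintype V] {G : SimpleGraph V} (hconn : G.Connected)
    (hn : 4 ≤ Fintype.card V)
    (hTw : ∀ u v : V, ¬ ClosedTwins G u v)
    (hS : ∀ v, IsSupport G v → 3 ≤ deg G v)
    (hT : ∀ a b c : V, G.Adj a b → G.Adj b c → G.Adj a c →
      2 ≤ (closedNbhd G a ∆ closedNbhd G b).ncard) :
    IsRedIC G (Set.univ : Set V) := by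
  constructor
  · intro v
    unfold kDominated
    rw [Set.inter_univ]
    have hcard : 1 < Fintype.card V := by omega
    obtain ⟨u, hune⟩ := Fintype.exists_ne_of_one_lt_card hcard v
    obtain ⟨p⟩ := hconn.preconnected v u
    have hadj : ∃ w, G.Adj v w := by
      cases p with
      | nil => exact absurd rfl (Ne.symm hune)
      | cons h q => exact ⟨_, h⟩
    obtain ⟨w, hw⟩ := hadj
    exact two_le_ncard_of_mem (mem_closedNbhd'.2 (Or.inl rfl))
      (mem_closedNbhd'.2 (Or.inr hw)) (Ne.symm hw.ne')
  · intro u v huv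
    unfold kDistinguished
    rw [Set.inter_univ, Set.inter_univ]
    by_cases hadj : G.Adj u v
    · have hne : closedNbhd G u ≠ closedNbhd G v := fun h => hTw u v ⟨huv, h⟩
      have hnonempty : (closedNbhd G u ∆ closedNbhd G v).Nonempty :=
        Set.symmDiff_nonempty.2 hne
      obtain ⟨w, hw⟩ := hnonempty
      rcases Set.mem_symmDiff.1 hw with ⟨h1, h2⟩ | ⟨h1, h2⟩
      · exact key hS hT hadj h1 h2
      · rw [symmDiff_comm]
        exact key hS hT hadj.symm h1 h2
    · have h1 : u ∈ closedNbhd G u ∆ closedNbhd G v := by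
        apply Set.mem_symmDiff.2
        left
        refine ⟨mem_closedNbhd'.2 (Or.inl rfl), ?_⟩
        rw [mem_closedNbhd']
        push_neg
        exact ⟨huv, fun h => hadj h.symm⟩
      have h2 : v ∈ closedNbhd G u ∆ closedNbhd G v := by
        apply Set.mem_symmDiff.2
        right
        refine ⟨mem_closedNbhd'.2 (Or.inl rfl), ?_⟩
        rw [mem_closedNbhd']
        push_neg
        exact ⟨Ne.symm huv, fun h => hadj h⟩
      exact two_le_ncard_of_mem h1 h2 huv

lemma nec [Fintype V] {G : SimpleGraph V} {S : Set V} (h : IsRedIC G S) :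
    (∀ u v : V, ¬ ClosedTwins G u v) ∧
    (∀ v : V, IsSupport G v → 3 ≤ deg G v) ∧
    (∀ a b c : V, G.Adj a b → G.Adj b c → G.Adj a c →
      2 ≤ (closedNbhd G a ∆ closedNbhd G b).ncard) := by
  refine ⟨?_, ?_, ?_⟩
  · rintro u v ⟨hne, heq⟩
    have := nec_distinct h u v hne
    rw [heq, symmDiff_self] at this
    simp at this
  · rintro v ⟨u, huv, hleaf⟩
    by_contra hlt
    push_neg at hlt
    have hNu : closedNbhd G u = {u, v} := leaf_closedNbhd huv hleaf
    have hsub : closedNbhd G u ∆ closedNbhd G v ⊆ G.neighborSet v \ {u} := by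
      intro x hx
      rcases Set.mem_symmDiff.1 hx with ⟨h1, h2⟩ | ⟨h1, h2⟩
      · exfalso
        rw [hNu] at h1
        rcases h1 with rfl | h1
        · exact h2 (mem_closedNbhd'.2 (Or.inr huv))
        · rw [Set.mem_singleton_iff] at h1
          subst h1
          exact h2 (mem_closedNbhd'.2 (Or.inl rfl))
      · rw [hNu] at h2
        simp only [Set.mem_insert_iff, Set.mem_singleton_iff, not_or] at h2
        refine ⟨?_, h2.1⟩
        rcases mem_closedNbhd'.1 h1 with rfl | h1
        · exact absurd rfl h2.2
        · exact h1
    have hu : u ∈ G.neighborSet v := huv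
    have hlt2 : (G.neighborSet v \ {u}).ncard < (G.neighborSet v).ncard :=
      Set.ncard_diff_singleton_lt_of_mem hu (Set.toFinite _)
    have h2 := nec_distinct h u v huv.ne'
    have h3 := Set.ncard_le_ncard hsub (Set.toFinite _)
    unfold deg at hlt
    omega
  · intro a b c hab hbc hac
    exact nec_distinct h a b hab.ne

theorem stmt_4 {V : Type*} [Fintype V] (G : SimpleGraph V) (hconn : G.Connected)
    (hn : 4 ≤ Fintype.card V) :
    ((∃ S : Set V, IsRedIC G S) ↔
      ((∀ u v : V, ¬ ClosedTwins G u v) ∧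
       (∀ v : V, IsSupport G v → 3 ≤ deg G v) ∧
       (∀ a b c : V, G.Adj a b → G.Adj b c → G.Adj a c →
         2 ≤ (closedNbhd G a ∆ closedNbhd G b).ncard))) ∧
    (((∀ u v : V, ¬ ClosedTwins G u v) ∧
      (∀ v : V, IsSupport G v → 3 ≤ deg G v) ∧
      (∀ a b c : V, G.Adj a b → G.Adj b c → G.Adj a c →
        2 ≤ (closedNbhd G a ∆ closedNbhd G b).ncard)) →
      IsRedIC G (Set.univ : Set V)) := by
  refine ⟨⟨?_, ?_⟩, ?_⟩
  · rintro ⟨S, hS⟩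
    exact nec hS
  · rintro ⟨h1, h2, h3⟩
    exact ⟨Set.univ, univ_red hconn hn h1 h2 h3⟩
  · rintro ⟨h1, h2, h3⟩
    exact univ_red hconn hn h1 h2 h3
end

section
/- If a finite simple graph G has a redundant identifying code S with |S| ≤ k, then |V(G)| ≤ 2^{k−1} − 1. -/
open scoped symmDiff

variable {V : Type*}

theorem stmt_6 {V : Type*} [Fintype V] (G : SimpleGraph V) (S : Set V) (k : ℕ)
    (hS : IsRedIC G S) (hk : S.ncard ≤ k) : Fintype.card V ≤ 2 ^ (k - 1) - 1 := by
  classical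
  by_cases hV : Nonempty V
  · obtain ⟨v₀⟩ := hV
    have h2 : 2 ≤ (closedNbhd G v₀ ∩ S).ncard := hS.1 v₀
    have hSne : S.Nonempty := by
      rcases Set.eq_empty_or_nonempty S with h | h
      · simp [h] at h2
      · exact h
    obtain ⟨s₀, hs₀⟩ := hSne
    set F : V → Finset V := fun v => ((closedNbhd G v ∩ S) \ {s₀}).toFinset with hF
    set T : Finset (Finset V) := (S.toFinset.erase s₀).powerset.erase ∅ with hT
    have hAfin : ∀ v : V, (closedNbhd G v ∩ S).Finite := fun v => Set.toFinite _
    have hne : ∀ v : V, ((closedNbhd G v ∩ S) \ {s₀}).Nonempty := by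
      intro v
      rw [Set.nonempty_iff_ne_empty]
      intro h
      have hsub : closedNbhd G v ∩ S ⊆ {s₀} := by
        intro x hx
        by_contra hxs
        have : x ∈ (closedNbhd G v ∩ S) \ {s₀} := ⟨hx, hxs⟩
        rw [h] at this
        exact this
      have hle := Set.ncard_le_ncard hsub (Set.finite_singleton s₀)
      have h2v : 2 ≤ (closedNbhd G v ∩ S).ncard := hS.1 v
      rw [Set.ncard_singleton] at hle
      omega
    have hmaps : ∀ v, F v ∈ T := by
      intro v
      refine Finset.mem_erase.mpr ⟨?_, ?_⟩
      · intro h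
        have := (hne v)
        rw [← Set.toFinset_nonempty,
          show ((closedNbhd G v ∩ S) \ {s₀}).toFinset = F v from rfl, h] at this
        exact (Finset.not_nonempty_empty this)
      · rw [Finset.mem_powerset]
        intro x hx
        simp only [hF, Set.mem_toFinset, Set.mem_diff, Set.mem_singleton_iff] at hx
        refine Finset.mem_erase.mpr ⟨hx.2, ?_⟩
        simp only [Set.mem_toFinset]
        exact hx.1.2
    have hinj : Function.Injective F := by
      intro u v huv
      by_contra hneq
      have hdist : 2 ≤ ((closedNbhd G u ∩ S) ∆ (closedNbhd G v ∩ S)).ncard := hS.2 u v hneq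
      have hset : (closedNbhd G u ∩ S) \ {s₀} = (closedNbhd G v ∩ S) \ {s₀} :=
        Set.toFinset_inj.mp huv
      have hsub : ((closedNbhd G u ∩ S) ∆ (closedNbhd G v ∩ S)) ⊆ {s₀} := by
        intro x hx
        by_contra hxs
        rw [Set.mem_symmDiff] at hx
        rcases hx with ⟨hxu, hxv⟩ | ⟨hxv, hxu⟩
        · have : x ∈ (closedNbhd G u ∩ S) \ {s₀} := ⟨hxu, hxs⟩
          rw [hset] at this
          exact hxv this.1
        · have : x ∈ (closedNbhd G v ∩ S) \ {s₀} := ⟨hxv, hxs⟩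
          rw [← hset] at this
          exact hxu this.1
      have hle := Set.ncard_le_ncard hsub (Set.finite_singleton s₀)
      rw [Set.ncard_singleton] at hle
      omega
    have hcard : Fintype.card V ≤ T.card := by
      rw [← Finset.card_univ]
      exact Finset.card_le_card_of_injOn F (fun v _ => hmaps v) (hinj.injOn)
    have hTcard : T.card = 2 ^ (S.toFinset.card - 1) - 1 := by
      rw [hT, Finset.card_erase_of_mem (Finset.empty_mem_powerset _),
        Finset.card_powerset, Finset.card_erase_of_mem (Set.mem_toFinset.mpr hs₀)]
    have hSk : S.toFinset.card ≤ k := by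
      rwa [← Set.ncard_eq_toFinset_card']
    have : 2 ^ (S.toFinset.card - 1) ≤ 2 ^ (k - 1) :=
      Nat.pow_le_pow_right (by norm_num) (by omega)
    omega
  · have h0 : Fintype.card V = 0 := by
      rw [Fintype.card_eq_zero_iff]
      exact not_nonempty_iff.mp hV
    omega
end

section
/- For every even integer k ≥ 4, there exists a finite simple graph G with exactly 2^{k−1} − 1 vertices such that RED:IC(G) = k. -/
open scoped symmDiff

variable {V : Type*}

/-!
If `S` is a redundant identifying code, the traces `N[v] ∩ S` have at least two elements and
pairwise symmetric differences of at least two elements. Deleting a fixed `s₀ ∈ S` from every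
trace therefore gives pairwise distinct nonempty subsets of `S \ {s₀}`, so the graph has at most
`2 ^ (|S| - 1) - 1` vertices.

For even `k` this bound is attained: take as vertices the `2 ^ (k - 1) - 1` nonempty even subsets
of `Fin k` (any two differ in at least two elements), choose as code vertices the sets `univ` and
`{0, i}`, `i ≠ 0`, and join a vertex `A` to the code vertex of index `i` whenever `i ∈ A`. Since
`i ∈ {0, j} ↔ j ∈ {0, i}` in this family, the trace of every vertex `A` is `A` itself.
-/

open Finset

namespace Finset

variable {α : Type*} [DecidableEq α]

theorem card_symmDiff_add_two_mul_card_inter (A B : Finset α) :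
    #(A ∆ B) + 2 * #(A ∩ B) = #A + #B := by
  have hAB := card_sdiff_add_card_inter A B
  have hBA := card_sdiff_add_card_inter B A
  rw [symmDiff_def, sup_eq_union, card_union_of_disjoint disjoint_sdiff_sdiff, inter_comm B A] at *
  omega

theorem two_le_card_symmDiff_of_even {A B : Finset α} (hAB : A ≠ B) (hA : Even #A)
    (hB : Even #B) : 2 ≤ #(A ∆ B) := by
  have hpos : #(A ∆ B) ≠ 0 := by
    simpa only [Ne, card_eq_zero, ← bot_eq_empty, symmDiff_eq_bot] using hAB
  have := card_symmDiff_add_two_mul_card_inter A B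
  obtain ⟨a, ha⟩ := hA
  obtain ⟨b, hb⟩ := hB
  omega

theorem even_card_symmDiff_singleton_iff (A : Finset α) (a : α) :
    Even #(A ∆ {a}) ↔ ¬Even #A := by
  have := card_symmDiff_add_two_mul_card_inter A {a}
  rw [card_singleton] at this
  rw [← Nat.even_add_one, ← this, Nat.even_add]
  simp

theorem card_filter_even_card [Fintype α] [Nonempty α] :
    #{A : Finset α | Even #A} = 2 ^ (Fintype.card α - 1) := by
  obtain ⟨a⟩ := ‹Nonempty α›
  have hswap : #{A : Finset α | Even #A} = #{A : Finset α | ¬Even #A} :=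
    card_nbij' (· ∆ {a}) (· ∆ {a})
      (fun A hA ↦ by
        simp only [mem_coe, mem_filter_univ] at hA ⊢
        rwa [even_card_symmDiff_singleton_iff, not_not])
      (fun A hA ↦ by
        simp only [mem_coe, mem_filter_univ] at hA ⊢
        rwa [even_card_symmDiff_singleton_iff])
      (by simp [Set.LeftInvOn]) (by simp [Set.LeftInvOn])
  have htotal :=
    card_filter_add_card_filter_not (s := (univ : Finset (Finset α))) (fun A ↦ Even #A)
  rw [card_univ, Fintype.card_finset, ← hswap] at htotal
  have hpow : 2 ^ Fintype.card α = 2 * 2 ^ (Fintype.card α - 1) := by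
    rw [← pow_succ', Nat.sub_add_cancel Fintype.card_pos]
  omega

theorem card_filter_nonempty_even_card [Fintype α] [Nonempty α] :
    #{A : Finset α | A.Nonempty ∧ Even #A} = 2 ^ (Fintype.card α - 1) - 1 := by
  have : ({A : Finset α | A.Nonempty ∧ Even #A} : Finset _) =
      ({A : Finset α | Even #A} : Finset _).erase ∅ := by
    ext A
    simp [nonempty_iff_ne_empty]
  rw [this, card_erase_of_mem (by simp), card_filter_even_card]

end Finset

section RedundantIdentifyingCode

variable {V : Type*} {G : SimpleGraph V} {S : Set V}

theorem IsRedIC.card_le [Finite V] (hS : IsRedIC G S) :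
    Nat.card V ≤ 2 ^ (S.ncard - 1) - 1 := by
  obtain ⟨hdom, hdist⟩ := hS
  rcases S.eq_empty_or_nonempty with rfl | ⟨s₀, hs₀⟩
  · have : IsEmpty V := ⟨fun v ↦ by simpa [kDominated] using hdom v⟩
    simp
  set f : V → Set V := fun v ↦ (closedNbhd G v ∩ S) \ {s₀}
  have hf_ne : ∀ v, f v ≠ ∅ := fun v hv ↦ by
    have h₁ : (closedNbhd G v ∩ S).ncard - 1 ≤ (f v).ncard :=
      Set.pred_ncard_le_ncard_sdiff_singleton _ _
    have h₂ : 2 ≤ _ := hdom v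
    rw [hv, Set.ncard_empty] at h₁
    omega
  have hf_inj : Function.Injective f := fun u v huv ↦ by
    by_contra hne
    have hsub : (closedNbhd G u ∩ S) ∆ (closedNbhd G v ∩ S) ⊆ {s₀} := by
      rw [← Set.sdiff_eq_empty]
      have : ((closedNbhd G u ∩ S) ∆ (closedNbhd G v ∩ S)) \ {s₀} = f u ∆ f v := by
        ext x
        simp only [f, Set.mem_sdiff, Set.mem_symmDiff]
        tauto
      rw [this, huv, symmDiff_self, Set.bot_eq_empty]
    have h₁ := Set.ncard_le_ncard hsub
    have h₂ : 2 ≤ _ := hdist u v hne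
    rw [Set.ncard_singleton] at h₁
    omega
  have hrange : Set.range f ⊆ 𝒫 (S \ {s₀}) \ {∅} := by
    rintro _ ⟨v, rfl⟩
    exact ⟨Set.sdiff_subset_sdiff_left Set.inter_subset_right, hf_ne v⟩
  calc Nat.card V = (Set.range f).ncard := (Set.ncard_range_of_injective hf_inj).symm
    _ ≤ (𝒫 (S \ {s₀}) \ {∅}).ncard := Set.ncard_le_ncard hrange
    _ = 2 ^ (S.ncard - 1) - 1 := by
      rw [Set.ncard_sdiff_singleton_of_mem (Set.empty_subset _), Set.ncard_powerset,
        Set.ncard_sdiff_singleton_of_mem hs₀]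

theorem redIC_le (hS : IsRedIC G S) : redIC G ≤ S.ncard :=
  Nat.sInf_le ⟨S, hS, rfl⟩

theorem redIC_eq_of_card_eq [Finite V] [Nonempty V] (hS : IsRedIC G S)
    (hcard : Nat.card V = 2 ^ (S.ncard - 1) - 1) : redIC G = S.ncard := by
  obtain ⟨S', hS', hS'card⟩ : redIC G ∈ {n | ∃ S : Set V, IsRedIC G S ∧ S.ncard = n} :=
    Nat.sInf_mem ⟨_, S, hS, rfl⟩
  refine (redIC_le hS).antisymm ?_
  have hle := hS'.card_le
  have hpos : 0 < Nat.card V := Nat.card_pos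
  have : 2 ^ (S.ncard - 1) ≤ 2 ^ (S'.ncard - 1) := by omega
  have := (Nat.pow_le_pow_iff_right (by norm_num)).mp this
  have : S'.ncard - 1 ≠ 0 := fun h ↦ by rw [h] at hle; omega
  omega

end RedundantIdentifyingCode

section TraceGraph

variable {V ι : Type*}

def traceGraph (T : V → Finset ι) (s : ι → V) : SimpleGraph V :=
  SimpleGraph.fromRel fun v w ↦ ∃ i, w = s i ∧ i ∈ T v

variable {T : V → Finset ι} {s : ι → V}

theorem closedNbhd_traceGraph_inter_range (hs : Function.Injective s)
    (hsymm : ∀ i j, i ∈ T (s j) → j ∈ T (s i)) (hself : ∀ i, i ∈ T (s i)) (v : V) :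
    closedNbhd (traceGraph T s) v ∩ Set.range s = s '' T v := by
  ext x
  constructor
  · rintro ⟨hx, j, rfl⟩
    refine ⟨j, ?_, rfl⟩
    rcases hx with hjv | ⟨-, ⟨i, hij, hi⟩ | ⟨i, rfl, hi⟩⟩
    · exact hjv ▸ hself j
    · exact hs hij ▸ hi
    · exact hsymm i j hi
  · rintro ⟨j, hj, rfl⟩
    refine ⟨?_, j, rfl⟩
    by_cases hjv : s j = v
    · exact hjv ▸ Set.mem_insert _ _
    · exact Or.inr ⟨Ne.symm hjv, Or.inl ⟨j, rfl, hj⟩⟩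

theorem isRedIC_traceGraph [DecidableEq ι] (hs : Function.Injective s)
    (hsymm : ∀ i j, i ∈ T (s j) → j ∈ T (s i)) (hself : ∀ i, i ∈ T (s i))
    (hdom : ∀ v, 2 ≤ #(T v)) (hdist : ∀ u v, u ≠ v → 2 ≤ #(T u ∆ T v)) :
    IsRedIC (traceGraph T s) (Set.range s) := by
  have htrace := closedNbhd_traceGraph_inter_range hs hsymm hself
  refine ⟨fun v ↦ ?_, fun u v huv ↦ ?_⟩
  · rw [kDominated, htrace, Set.ncard_image_of_injective _ hs, Set.ncard_coe_finset]
    exact hdom v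
  · rw [kDistinguished, htrace, htrace, ← Set.image_symmDiff hs, ← Finset.coe_symmDiff,
      Set.ncard_image_of_injective _ hs, Set.ncard_coe_finset]
    exact hdist u v huv

theorem isRedIC_traceGraph_of_even [DecidableEq ι] (hs : Function.Injective s)
    (hsymm : ∀ i j, i ∈ T (s j) → j ∈ T (s i)) (hself : ∀ i, i ∈ T (s i))
    (hT : Function.Injective T) (hne : ∀ v, (T v).Nonempty)
    (heven : ∀ v, Even #(T v)) : IsRedIC (traceGraph T s) (Set.range s) := by
  refine isRedIC_traceGraph hs hsymm hself (fun v ↦ ?_) fun u v huv ↦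
    two_le_card_symmDiff_of_even (hT.ne huv) (heven u) (heven v)
  obtain ⟨m, hm⟩ := heven v
  have := (hne v).card_pos
  omega

end TraceGraph

section StarSet

variable {α : Type*} [Fintype α] [DecidableEq α]

/-- Traces of the code vertices in the extremal graph: the hub `a` sees the whole code, every
other code vertex only itself and the hub. -/
def starSet (a i : α) : Finset α := if i = a then univ else {a, i}

theorem mem_starSet_comm {a i j : α} (h : i ∈ starSet a j) : j ∈ starSet a i := by
  unfold starSet at *
  split_ifs at * <;> simp_all

theorem self_mem_starSet (a i : α) : i ∈ starSet a i := by
  unfold starSet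
  split_ifs <;> simp

theorem starSet_nonempty (a i : α) : (starSet a i).Nonempty :=
  ⟨i, self_mem_starSet a i⟩

theorem even_card_starSet (h : Even (Fintype.card α)) (a i : α) : Even #(starSet a i) := by
  unfold starSet
  split_ifs with hi
  · rwa [card_univ]
  · rw [card_pair (Ne.symm hi)]
    exact even_two

theorem starSet_injective (h : 2 < Fintype.card α) (a : α) : Function.Injective (starSet a) := by
  intro i j hij
  have hcard := congrArg card hij
  unfold starSet at *
  split_ifs at * with hi hj hj
  · rw [hi, hj]
  · have := card_le_two (a := a) (b := j)
    rw [card_univ] at hcard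
    omega
  · have := card_le_two (a := a) (b := i)
    rw [card_univ] at hcard
    omega
  · simpa [hi] using hij.subset (mem_insert_of_mem (mem_singleton_self i))

end StarSet

theorem stmt_8 (k : ℕ) (hk : Even k) (h4 : 4 ≤ k) :
    ∃ G : SimpleGraph (Fin (2 ^ (k - 1) - 1)), redIC G = k := by
  have : NeZero k := ⟨by omega⟩
  let e : Fin (2 ^ (k - 1) - 1) ≃ {A : Finset (Fin k) // A.Nonempty ∧ Even #A} :=
    (Fintype.equivFinOfCardEq (by
      rw [Fintype.card_subtype, card_filter_nonempty_even_card, Fintype.card_fin])).symm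
  let T v := (e v).1
  have hkcard : Even (Fintype.card (Fin k)) := by rwa [Fintype.card_fin]
  let s i := e.symm ⟨starSet 0 i, starSet_nonempty 0 i, even_card_starSet hkcard 0 i⟩
  have hTs : ∀ i, T (s i) = starSet 0 i := fun i ↦ by simp [T, s]
  have hs : Function.Injective s := fun i j hij ↦
    starSet_injective (by rw [Fintype.card_fin]; omega) 0 (by simpa only [hTs] using congrArg T hij)
  have hS : IsRedIC (traceGraph T s) (Set.range s) :=
    isRedIC_traceGraph_of_even hs (fun i j ↦ by simpa only [hTs] using mem_starSet_comm)
      (fun i ↦ by simpa only [hTs] using self_mem_starSet 0 i)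
      (Subtype.val_injective.comp e.injective) (fun v ↦ (e v).2.1) (fun v ↦ (e v).2.2)
  have hcode : (Set.range s).ncard = k := by rw [Set.ncard_range_of_injective hs, Nat.card_fin]
  have : Nonempty (Fin (2 ^ (k - 1) - 1)) := ⟨s 0⟩
  refine ⟨traceGraph T s, ?_⟩
  rw [redIC_eq_of_card_eq hS (by rw [Nat.card_fin, hcode]), hcode]
end

section
/- For every odd integer k ≥ 5, there exists a finite simple graph G with exactly 2^{k−1} − k vertices that admits a redundant identifying code of size k. -/
open scoped symmDiff

variable {V : Type*}

/-! The vertices are the subsets of `Fin k` of odd size at least 3, of which there are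
`2 ^ (k - 1) - k`, and the code consists of the `k` triples `{i - 1, i, i + 1}`. Joining every
set `A` to the triples centred at the elements of `A` (so the triples themselves form a `k`-cycle)
makes the trace `N[A] ∩ S` a copy of `A`. Hence each vertex is dominated `|A| ≥ 3` times, and two
distinct sets of odd size differ in an even, nonzero, number of elements. -/

namespace Finset

variable {α : Type*}

theorem two_le_card_symmDiff_of_odd [DecidableEq α] {s t : Finset α} (hs : Odd #s) (ht : Odd #t)
    (hst : s ≠ t) : 2 ≤ #(s ∆ t) := by
  have hpos : 0 < #(s ∆ t) := card_pos.mpr (nonempty_iff_ne_empty.mpr (symmDiff_eq_bot.not.mpr hst))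
  have hsplit : #(s ∆ t) = #(s \ t) + #(t \ s) := card_union_of_disjoint disjoint_sdiff_sdiff
  have hs' := card_sdiff_add_card_inter s t
  have ht' := card_sdiff_add_card_inter t s
  rw [inter_comm] at ht'
  obtain ⟨a, ha⟩ := hs
  obtain ⟨b, hb⟩ := ht
  omega

theorem card_powerset_filter_odd {s : Finset α} (hs : s.Nonempty) :
    #{A ∈ s.powerset | Odd #A} = 2 ^ (#s - 1) := by
  have htotal := card_filter_add_card_filter_not (s := s.powerset) (fun A => Odd #A)
  have heven : ∑ A ∈ s.powerset with ¬Odd #A, (-1 : ℤ) ^ #A = #{A ∈ s.powerset | ¬Odd #A} := by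
    rw [sum_congr rfl fun A hA => (Nat.not_odd_iff_even.mp (mem_filter.mp hA).2).neg_one_pow]
    simp
  have hodd : ∑ A ∈ s.powerset with Odd #A, (-1 : ℤ) ^ #A = -#{A ∈ s.powerset | Odd #A} := by
    rw [sum_congr rfl fun A hA => (mem_filter.mp hA).2.neg_one_pow]
    simp
  have hbalance := sum_powerset_neg_one_pow_card_of_nonempty hs
  rw [← sum_filter_not_add_sum_filter _ (fun A => Odd #A), heven, hodd] at hbalance
  have hpow : 2 ^ #s = 2 * 2 ^ (#s - 1) := by
    rw [← pow_succ', Nat.sub_add_cancel hs.card_pos]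
  rw [card_powerset] at htotal
  omega

theorem card_filter_three_le_odd [Fintype α] [Nonempty α] :
    #{A : Finset α | 3 ≤ #A ∧ Odd #A} = 2 ^ (Fintype.card α - 1) - Fintype.card α := by
  classical
  have hsplit : ({A : Finset α | 3 ≤ #A ∧ Odd #A} : Finset _) =
      {A ∈ (univ : Finset α).powerset | Odd #A} \ (univ : Finset α).powersetCard 1 := by
    ext A
    simp only [mem_filter, mem_sdiff, mem_powerset, mem_powersetCard, subset_univ, true_and,
      mem_univ]
    constructor
    · rintro ⟨h3, hodd⟩
      exact ⟨hodd, by omega⟩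
    · rintro ⟨⟨m, hm⟩, h1⟩
      exact ⟨by omega, ⟨m, hm⟩⟩
  rw [hsplit, card_sdiff_of_subset, card_powerset_filter_odd univ_nonempty, card_powersetCard,
    card_univ, Nat.choose_one_right]
  intro A hA
  rw [mem_powersetCard] at hA
  simp [hA.2]

end Finset

open Finset

section Transport

variable {V W : Type*}

theorem closedNbhd_comap_equiv (G : SimpleGraph W) (e : V ≃ W) (v : V) :
    closedNbhd (G.comap e) v = e ⁻¹' closedNbhd G (e v) := by
  ext u
  simp [closedNbhd, eq_comm, e.apply_eq_iff_eq]

theorem ncard_preimage_equiv (e : V ≃ W) (T : Set W) : (e ⁻¹' T).ncard = T.ncard :=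
  Set.ncard_preimage_of_injective_subset_range e.injective (by simp)

theorem IsRedIC.comap_equiv {G : SimpleGraph W} {S : Set W} (h : IsRedIC G S) (e : V ≃ W) :
    IsRedIC (G.comap e) (e ⁻¹' S) := by
  have hN (v : V) : closedNbhd (G.comap e) v ∩ e ⁻¹' S = e ⁻¹' (closedNbhd G (e v) ∩ S) := by
    rw [closedNbhd_comap_equiv, Set.preimage_inter]
  refine ⟨fun v => ?_, fun u v huv => ?_⟩
  · rw [kDominated, hN, ncard_preimage_equiv]
    exact h.1 (e v)
  · rw [kDistinguished, hN, hN, ← Set.preimage_symmDiff, ncard_preimage_equiv]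
    exact h.2 (e u) (e v) (e.injective.ne huv)

end Transport

theorem isRedIC_of_closedNbhd_inter_eq_image {V α : Type*} {G : SimpleGraph V}
    {S : Set V} (c : α → V) (hc : Function.Injective c) (f : V → Finset α)
    (hf : Function.Injective f) (two_le_card : ∀ v, 2 ≤ #(f v)) (odd_card : ∀ v, Odd #(f v))
    (hN : ∀ v, closedNbhd G v ∩ S = c '' f v) : IsRedIC G S := by
  classical
  refine ⟨fun v => ?_, fun u v huv => ?_⟩
  · rw [kDominated, hN, Set.ncard_image_of_injective _ hc, Set.ncard_coe_finset]
    exact two_le_card v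
  · rw [kDistinguished, hN, hN, ← Set.image_symmDiff hc, ← coe_symmDiff,
      Set.ncard_image_of_injective _ hc, Set.ncard_coe_finset]
    exact two_le_card_symmDiff_of_odd (odd_card u) (odd_card v) (hf.ne huv)

section CodeGraph

variable {α : Type*}

abbrev OddSubset (α : Type*) := {A : Finset α // 3 ≤ #A ∧ Odd #A}

def codeGraph (N : α → OddSubset α) : SimpleGraph (OddSubset α) :=
  SimpleGraph.fromRel fun A B => ∃ j ∈ A.1, B = N j

variable {N : α → OddSubset α} (hN : Function.Injective N) (self_mem : ∀ i, i ∈ (N i).1)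
  (mem_comm : ∀ i j, j ∈ (N i).1 → i ∈ (N j).1)
include hN self_mem mem_comm

theorem closedNbhd_codeGraph_inter_range (A : OddSubset α) :
    closedNbhd (codeGraph N) A ∩ Set.range N = N '' A.1 := by
  ext B
  simp only [Set.mem_inter_iff, Set.mem_range, Set.mem_image, Finset.mem_coe]
  constructor
  · rintro ⟨hB, i, rfl⟩
    refine ⟨i, ?_, rfl⟩
    rcases hB with hAi | ⟨-, ⟨j, hj, hij⟩ | ⟨j, hj, rfl⟩⟩
    · exact hAi ▸ self_mem i
    · exact hN hij ▸ hj
    · exact mem_comm i j hj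
  · rintro ⟨i, hi, rfl⟩
    refine ⟨?_, i, rfl⟩
    by_cases hAi : N i = A
    · exact Or.inl hAi
    · exact Or.inr ⟨Ne.symm hAi, Or.inl ⟨i, hi, rfl⟩⟩

theorem isRedIC_codeGraph : IsRedIC (codeGraph N) (Set.range N) :=
  isRedIC_of_closedNbhd_inter_eq_image N hN Subtype.val Subtype.val_injective
    (fun A => by have := A.2.1; omega) (fun A => A.2.2)
    (closedNbhd_codeGraph_inter_range hN self_mem mem_comm)

end CodeGraph

section CycleTriple

open Fin.CommRing

variable {k : ℕ} [NeZero k]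

theorem Fin.add_natCast_ne_self (i : Fin k) {m : ℕ} (hm0 : 0 < m) (hmk : m < k) :
    i + (m : Fin k) ≠ i := by
  rw [Ne, add_eq_left, Fin.natCast_eq_zero]
  exact Nat.not_dvd_of_pos_of_lt hm0 hmk

def cycleTriple (i : Fin k) : Finset (Fin k) := {i - 1, i, i + 1}

theorem mem_cycleTriple {i j : Fin k} : j ∈ cycleTriple i ↔ j = i - 1 ∨ j = i ∨ j = i + 1 := by
  simp [cycleTriple]

theorem self_mem_cycleTriple (i : Fin k) : i ∈ cycleTriple i := by
  simp [cycleTriple]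

theorem mem_cycleTriple_comm {i j : Fin k} (h : j ∈ cycleTriple i) : i ∈ cycleTriple j := by
  rw [mem_cycleTriple] at h ⊢
  rcases h with rfl | rfl | rfl <;> simp

theorem card_cycleTriple (hk : 3 ≤ k) (i : Fin k) : #(cycleTriple i) = 3 := by
  have h1 : i - 1 ≠ i := fun h =>
    i.add_natCast_ne_self (m := 1) (by omega) (by omega) (by push_cast; linear_combination -h)
  have h2 : i - 1 ≠ i + 1 := fun h =>
    i.add_natCast_ne_self (m := 2) (by omega) (by omega) (by push_cast; linear_combination -h)
  have h3 : i ≠ i + 1 := fun h =>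
    i.add_natCast_ne_self (m := 1) (by omega) (by omega) (by push_cast; linear_combination -h)
  rw [cycleTriple, card_insert_of_notMem (by simp [h1, h2]), card_insert_of_notMem (by simp [h3]),
    card_singleton]

theorem add_two_notMem_cycleTriple (hk : 4 ≤ k) (i : Fin k) : i + 2 ∉ cycleTriple i := by
  rw [mem_cycleTriple]
  rintro (h | h | h)
  · exact i.add_natCast_ne_self (m := 3) (by omega) (by omega) (by push_cast; linear_combination h)
  · exact i.add_natCast_ne_self (m := 2) (by omega) (by omega) (by push_cast; linear_combination h)
  · exact i.add_natCast_ne_self (m := 1) (by omega) (by omega) (by push_cast; linear_combination h)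

theorem sub_two_notMem_cycleTriple (hk : 4 ≤ k) (i : Fin k) : i - 2 ∉ cycleTriple i := by
  have := add_two_notMem_cycleTriple hk (i - 2)
  rw [sub_add_cancel] at this
  exact fun h => this (mem_cycleTriple_comm h)

theorem cycleTriple_injective (hk : 4 ≤ k) : Function.Injective (cycleTriple (k := k)) := by
  intro i j hij
  have hi : i ∈ cycleTriple j := hij ▸ self_mem_cycleTriple i
  rw [mem_cycleTriple] at hi
  rcases hi with rfl | rfl | rfl
  · refine absurd ?_ (sub_two_notMem_cycleTriple hk j)
    rw [← hij, mem_cycleTriple]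
    left; ring
  · rfl
  · refine absurd ?_ (add_two_notMem_cycleTriple hk j)
    rw [← hij, mem_cycleTriple]
    right; right; ring

end CycleTriple

theorem stmt_9_general (k : ℕ) (h5 : 5 ≤ k) :
    ∃ (G : SimpleGraph (Fin (2 ^ (k - 1) - k))) (S : Set (Fin (2 ^ (k - 1) - k))),
      IsRedIC G S ∧ S.ncard = k := by
  have : NeZero k := ⟨by omega⟩
  let N (i : Fin k) : OddSubset (Fin k) :=
    ⟨cycleTriple i, by rw [card_cycleTriple (by omega)]; decide⟩
  have hN : Function.Injective N := fun i j h =>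
    cycleTriple_injective (by omega) (congrArg Subtype.val h)
  have hcard : Fintype.card (OddSubset (Fin k)) = 2 ^ (k - 1) - k := by
    rw [Fintype.card_subtype, card_filter_three_le_odd, Fintype.card_fin]
  let e := (Fintype.equivFinOfCardEq hcard).symm
  have hcode := isRedIC_codeGraph hN self_mem_cycleTriple fun _ _ => mem_cycleTriple_comm
  refine ⟨_, _, hcode.comap_equiv e, ?_⟩
  rw [ncard_preimage_equiv, ← Set.image_univ, Set.ncard_image_of_injective _ hN, Set.ncard_univ,
    Nat.card_eq_fintype_card, Fintype.card_fin]

theorem stmt_9 (k : ℕ) (hk : Odd k) (h5 : 5 ≤ k) :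
    ∃ (G : SimpleGraph (Fin (2 ^ (k - 1) - k))) (S : Set (Fin (2 ^ (k - 1) - k))),
      IsRedIC G S ∧ S.ncard = k :=
  stmt_9_general k h5
end

section
/- Let n ≥ 4 be even and let G be the complete multipartite graph with n/2 parts each of size 2 (the cocktail-party graph, i.e., K_n with a perfect matching removed). Then G admits a redundant identifying code and RED:IC(G) = n, i.e., the only redundant identifying code of G is the full vertex set. -/
open scoped symmDiff

variable {V : Type*}

/-- cocktail-party graph (vertices `2m, 2m+1` form the parts of size 2). -/
theorem stmt_10 (n : ℕ) (hn : Even n) (h4 : 4 ≤ n) (G : SimpleGraph (Fin n))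
    (hG : ∀ u v : Fin n, G.Adj u v ↔ (u : ℕ) / 2 ≠ (v : ℕ) / 2) :
    (∃ S : Set (Fin n), IsRedIC G S) ∧ redIC G = n ∧
    (∀ S : Set (Fin n), IsRedIC G S → S = Set.univ) := by
  classical
  have hn2 : n % 2 = 0 := Nat.even_iff.mp hn
  -- existence of a "partner" for each vertex
  have hex : ∀ v : Fin n, ∃ w : Fin n, ∀ x : Fin n, x ∈ closedNbhd G v ↔ x ≠ w := by
    intro v
    have hv := v.isLt
    have hb : 2 * (v.val / 2) + 1 - v.val % 2 < n := by omega
    refine ⟨⟨2 * (v.val / 2) + 1 - v.val % 2, hb⟩, fun x => ?_⟩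
    have hx : x ∈ closedNbhd G v ↔ (x = v ∨ G.Adj v x) := by
      simp [closedNbhd]
    rw [hx, hG]
    have hxv : x = v ↔ x.val = v.val := Fin.ext_iff
    constructor
    · rintro (h | h) heq
      · have h2 := congrArg Fin.val heq
        simp only [hxv] at h
        simp at h2
        omega
      · have h2 := congrArg Fin.val heq
        simp at h2
        omega
    · intro hne
      by_cases hxv' : x = v
      · exact Or.inl hxv'
      · refine Or.inr fun hdiv => ?_
        have h1 : x.val ≠ v.val := fun h => hxv' (Fin.ext h)
        have h2 : x.val ≠ 2 * (v.val / 2) + 1 - v.val % 2 := fun h => hne (Fin.ext h)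
        have hx2 := x.isLt
        omega
  choose p hp using hex
  have hvmem : ∀ v : Fin n, v ∈ closedNbhd G v := fun v => Set.mem_insert _ _
  have hpne : ∀ v : Fin n, v ≠ p v := fun v => (hp v v).mp (hvmem v)
  have hsymm : ∀ x v : Fin n, x ∈ closedNbhd G v ↔ v ∈ closedNbhd G x := by
    intro x v
    simp only [closedNbhd, Set.mem_insert_iff, SimpleGraph.mem_neighborSet, hG]
    constructor
    · rintro (h | h)
      · exact Or.inl h.symm
      · exact Or.inr h.symm
    · rintro (h | h)
      · exact Or.inl h.symm
      · exact Or.inr h.symm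
  have hinv : ∀ v : Fin n, p (p v) = v := by
    intro v
    have h1 : p v ∉ closedNbhd G v := fun h => (hp v (p v)).mp h rfl
    have h2 : v ∉ closedNbhd G (p v) := fun h => h1 ((hsymm _ _).mpr h)
    have h3 := (hp (p v) v).not.mp h2
    exact (not_not.mp h3).symm
  have hN : ∀ v : Fin n, closedNbhd G v = {p v}ᶜ := by
    intro v
    ext x
    rw [hp]
    simp
  have hsd : ∀ (S : Set (Fin n)) (u v : Fin n), u ≠ v →
      (closedNbhd G u ∩ S) ∆ (closedNbhd G v ∩ S) = S ∩ {p u, p v} := by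
    intro S u v huv
    have hpp : p u ≠ p v := fun h => huv (by rw [← hinv u, h, hinv])
    ext x
    simp only [hN, Set.mem_symmDiff, Set.mem_inter_iff, Set.mem_compl_iff,
      Set.mem_singleton_iff, Set.mem_insert_iff, not_and, not_not]
    by_cases h1 : x = p u <;> by_cases h2 : x = p v <;>
      simp [h1, h2, hpp, Ne.symm hpp] <;> tauto
  have hpair : ∀ a b : Fin n, a ≠ b → ({a, b} : Set (Fin n)).ncard = 2 :=
    fun a b h => Set.ncard_pair h
  -- characterization of 2-distinguished
  have hdist : ∀ (S : Set (Fin n)) (u v : Fin n), u ≠ v →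
      (kDistinguished G S 2 u v ↔ p u ∈ S ∧ p v ∈ S) := by
    intro S u v huv
    have hpp : p u ≠ p v := fun h => huv (by rw [← hinv u, h, hinv])
    unfold kDistinguished
    rw [hsd S u v huv]
    constructor
    · intro hle
      have hsub : S ∩ {p u, p v} ⊆ ({p u, p v} : Set (Fin n)) := Set.inter_subset_right
      have heq : S ∩ {p u, p v} = ({p u, p v} : Set (Fin n)) :=
        Set.eq_of_subset_of_ncard_le hsub (by rw [hpair _ _ hpp]; exact hle) (Set.toFinite _)
      constructor
      · have h1 : p u ∈ S ∩ {p u, p v} := by rw [heq]; simp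
        exact h1.1
      · have h1 : p v ∈ S ∩ {p u, p v} := by rw [heq]; simp
        exact h1.1
    · rintro ⟨h1, h2⟩
      have heq : S ∩ {p u, p v} = ({p u, p v} : Set (Fin n)) := by
        apply Set.inter_eq_self_of_subset_right
        rintro x (rfl | rfl)
        · exact h1
        · simpa using h2
      rw [heq, hpair _ _ hpp]
  -- only univ works
  have honly : ∀ S : Set (Fin n), IsRedIC G S → S = Set.univ := by
    intro S hS
    ext w
    simp only [Set.mem_univ, iff_true]
    have huv : p w ≠ w := (hpne w).symm
    have := (hdist S (p w) w huv).mp (hS.2 (p w) w huv)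
    rw [hinv w] at this
    exact this.1
  -- univ is a RED:IC
  have huniv : IsRedIC G (Set.univ : Set (Fin n)) := by
    constructor
    · intro v
      unfold kDominated
      rw [Set.inter_univ, hN]
      have h0 : ({p v}ᶜ : Set (Fin n)).ncard = n - 1 := by
        have := Set.ncard_add_ncard_compl ({p v} : Set (Fin n))
        rw [Set.ncard_singleton] at this
        simp [Fintype.card_fin] at this
        omega
      omega
    · intro u v huv
      exact (hdist Set.univ u v huv).mpr ⟨Set.mem_univ _, Set.mem_univ _⟩
  refine ⟨⟨Set.univ, huniv⟩, ?_, honly⟩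
  have hset : {m | ∃ S : Set (Fin n), IsRedIC G S ∧ S.ncard = m} = {n} := by
    ext m
    simp only [Set.mem_setOf_eq, Set.mem_singleton_iff]
    constructor
    · rintro ⟨S, hS, rfl⟩
      rw [honly S hS, Set.ncard_univ, Nat.card_eq_fintype_card, Fintype.card_fin]
    · rintro rfl
      exact ⟨Set.univ, huniv, by rw [Set.ncard_univ, Nat.card_eq_fintype_card, Fintype.card_fin]⟩
  rw [redIC, hset, csInf_singleton]
end

section
/- Let G be a finite simple graph, let S be a redundant identifying code of G, and let v ∈ V(G) be adjacent to a support vertex of degree 3. Then v ∈ S. -/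
open scoped symmDiff

variable {V : Type*}

theorem stmt_11 {V : Type*} [Fintype V] (G : SimpleGraph V) (S : Set V)
    (hS : IsRedIC G S) (v w : V) (hvw : G.Adj v w) (hw : IsSupport G w)
    (hdeg : deg G w = 3) : v ∈ S := by
  obtain ⟨l, hwl, hleaf⟩ := hw
  have hlw : G.Adj l w := hwl.symm
  -- neighborSet l = {w}
  obtain ⟨a, ha⟩ := Set.ncard_eq_one.mp hleaf
  have hwa : w ∈ G.neighborSet l := hlw
  rw [ha] at hwa
  obtain rfl : w = a := hwa
  have hne : l ≠ w := G.ne_of_adj hlw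
  have hClu : closedNbhd G l = {l, w} := by
    unfold closedNbhd; rw [ha]
  -- 2-domination of l gives {l, w} ⊆ S
  have hdom := hS.1 l
  unfold kDominated at hdom
  rw [hClu] at hdom
  have hpair : ({l, w} : Set V).ncard = 2 := Set.ncard_pair hne
  have hinter : ({l, w} : Set V) ∩ S = {l, w} :=
    Set.eq_of_subset_of_ncard_le Set.inter_subset_left (by omega)
  have hlwS : ({l, w} : Set V) ⊆ S := Set.inter_eq_left.mp hinter
  -- {l, w} ⊆ closedNbhd w ∩ S
  have hsubB : ({l, w} : Set V) ⊆ closedNbhd G w ∩ S := by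
    intro x hx
    rcases hx with rfl | rfl
    · exact ⟨Set.mem_insert_of_mem _ hwl, hlwS (Set.mem_insert _ _)⟩
    · exact ⟨Set.mem_insert _ _, hlwS (Set.mem_insert_of_mem _ rfl)⟩
  have hdist := hS.2 l w hne
  unfold kDistinguished at hdist
  rw [hClu, hinter, symmDiff_of_le hsubB] at hdist
  -- the difference is inside N(w) \ {l}
  have hsub2 : (closedNbhd G w ∩ S) \ {l, w} ⊆ G.neighborSet w \ {l} := by
    rintro x ⟨⟨hx1, _⟩, hx2⟩
    simp only [Set.mem_insert_iff, Set.mem_singleton_iff, not_or] at hx2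
    rcases hx1 with rfl | hx1
    · exact absurd rfl hx2.2
    · exact ⟨hx1, hx2.1⟩
  have hcard : (G.neighborSet w \ {l}).ncard = 2 := by
    rw [Set.ncard_diff_singleton_of_mem (show l ∈ G.neighborSet w from hwl)]
    unfold deg at hdeg; omega
  have heq : (closedNbhd G w ∩ S) \ {l, w} = G.neighborSet w \ {l} :=
    Set.eq_of_subset_of_ncard_le hsub2 (by omega)
  have hNwS : G.neighborSet w \ {l} ⊆ S := by
    intro x hx
    rw [← heq] at hx
    exact hx.1.2
  by_cases hvl : v = l
  · exact hvl ▸ hlwS (Set.mem_insert _ _)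
  · exact hNwS ⟨hvw.symm, hvl⟩
end

section
/- Let G be a finite simple graph and let S be a redundant identifying code of G. If v, w, u are distinct vertices with vw and wu edges of G (a path v–w–u) such that both u and w have degree 2, then v ∈ S. -/
open scoped symmDiff

variable {V : Type*}

/- If `v ∉ S`, the closed neighbourhoods of the adjacent vertices `w` and `u` can only differ
inside `S` by the neighbours of `w` other than `u` (namely `v`, which is not in `S`) and the
neighbours of `u` other than `w` (a single vertex, since `u` has degree 2). So `S` distinguishes
`w` and `u` by at most one vertex, contradicting redundancy. -/

section

variable {G : SimpleGraph V}

lemma closedNbhd_sdiff_subset_of_adj {a b : V} (h : G.Adj a b) :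
    closedNbhd G a \ closedNbhd G b ⊆ G.neighborSet a \ {b} := by
  rintro x ⟨rfl | hxa, hxb⟩
  · exact absurd (Or.inr h.symm) hxb
  · exact ⟨hxa, fun hx => hxb (Or.inl hx)⟩

lemma ncard_symmDiff_closedNbhd_inter_le_of_adj {a b : V} (S : Set V) (h : G.Adj a b)
    (ha : (G.neighborSet a).Finite) (hb : (G.neighborSet b).Finite) :
    ((closedNbhd G a ∩ S) ∆ (closedNbhd G b ∩ S)).ncard ≤
      ((G.neighborSet a \ {b}) ∩ S).ncard + ((G.neighborSet b \ {a}) ∩ S).ncard := by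
  have hsub : (closedNbhd G a ∩ S) ∆ (closedNbhd G b ∩ S) ⊆
      (G.neighborSet a \ {b}) ∩ S ∪ (G.neighborSet b \ {a}) ∩ S := by
    rw [← Set.inter_symmDiff_distrib_right, Set.symmDiff_def, Set.union_inter_distrib_right]
    exact Set.union_subset_union
      (Set.inter_subset_inter_left S (closedNbhd_sdiff_subset_of_adj h))
      (Set.inter_subset_inter_left S (closedNbhd_sdiff_subset_of_adj h.symm))
  have hfin : ((G.neighborSet a \ {b}) ∩ S ∪ (G.neighborSet b \ {a}) ∩ S).Finite :=
    (ha.sdiff.inter_of_left S).union (hb.sdiff.inter_of_left S)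
  exact (Set.ncard_le_ncard hsub hfin).trans (Set.ncard_union_le _ _)

lemma ncard_neighborSet_sdiff_singleton_of_deg_eq_two {a b : V} (h : G.Adj a b)
    (ha : deg G a = 2) : (G.neighborSet a \ {b}).ncard = 1 := by
  rw [Set.ncard_sdiff_singleton_of_mem (s := G.neighborSet a) h,
    show (G.neighborSet a).ncard = 2 from ha]

lemma neighborSet_finite_of_deg_eq_two {a : V} (ha : deg G a = 2) :
    (G.neighborSet a).Finite :=
  Set.finite_of_ncard_pos (show 0 < deg G a by omega)

end

theorem stmt_12_general {V : Type*} (G : SimpleGraph V) (S : Set V)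
    (hS : IsRedIC G S) (v w u : V) (hvu : v ≠ u) (hvw : G.Adj v w) (hwu : G.Adj w u)
    (hw : deg G w = 2) (hu : deg G u = 2) : v ∈ S := by
  by_contra hvS
  have hw_nbrs : G.neighborSet w \ {u} = {v} := by
    obtain ⟨x, hx⟩ :=
      Set.ncard_eq_one.mp (ncard_neighborSet_sdiff_singleton_of_deg_eq_two hwu hw)
    have hv : v ∈ G.neighborSet w \ {u} := ⟨hvw.symm, hvu⟩
    rw [hx] at hv ⊢
    rw [Set.mem_singleton_iff.mp hv]
  have hw_side : ((G.neighborSet w \ {u}) ∩ S).ncard = 0 := by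
    rw [hw_nbrs, Set.singleton_inter_eq_empty.mpr hvS, Set.ncard_empty]
  have hu_side : ((G.neighborSet u \ {w}) ∩ S).ncard ≤ 1 :=
    (Set.ncard_inter_le_ncard_left _ _ (neighborSet_finite_of_deg_eq_two hu).sdiff).trans_eq
      (ncard_neighborSet_sdiff_singleton_of_deg_eq_two hwu.symm hu)
  have hdist := (hS.2 w u hwu.ne).trans
    (ncard_symmDiff_closedNbhd_inter_le_of_adj S hwu
      (neighborSet_finite_of_deg_eq_two hw) (neighborSet_finite_of_deg_eq_two hu))
  omega

theorem stmt_12 {V : Type*} [Fintype V] (G : SimpleGraph V) (S : Set V)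
    (hS : IsRedIC G S) (v w u : V) (hvu : v ≠ u) (hvw : G.Adj v w) (hwu : G.Adj w u)
    (hw : deg G w = 2) (hu : deg G u = 2) : v ∈ S :=
  stmt_12_general G S hS v w u hvu hvw hwu hw hu
end

section
/- For every n ≥ 4, the only redundant identifying code of the cycle C_n is the full vertex set; hence RED:IC(C_n) = n. -/
open scoped symmDiff

variable {V : Type*}

/-!
In `C_n` with `n ≥ 4` the closed neighbourhoods of adjacent vertices `v`, `v + 1` differ in
exactly the two vertices `v - 1` and `v + 2`. A code that 2-distinguishes `v + 1` and `v + 2`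
must therefore contain `v`, so the only candidate is the full vertex set. That one does work:
adjacent vertices are separated by the two vertices above, non-adjacent ones by themselves.
-/

section Graph

variable {G : SimpleGraph V} {S : Set V} {u v : V}

theorem kDistinguished_iff {k : ℕ} :
    kDistinguished G S k u v ↔ k ≤ ((closedNbhd G u ∆ closedNbhd G v) ∩ S).ncard := by
  rw [kDistinguished, Set.inter_symmDiff_distrib_right]

theorem self_mem_symmDiff_closedNbhd (huv : u ≠ v) (hadj : ¬G.Adj u v) :
    u ∈ closedNbhd G u ∆ closedNbhd G v := by
  refine Set.mem_symmDiff.2 (Or.inl ⟨Set.mem_insert u _, ?_⟩)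
  rintro (h | h)
  exacts [huv h, hadj (G.adj_symm h)]

theorem IsRedIC.mem_of_symmDiff_closedNbhd_subset (hS : IsRedIC G S) (huv : u ≠ v) {a b : V}
    (h : closedNbhd G u ∆ closedNbhd G v ⊆ {a, b}) : a ∈ S := by
  by_contra ha
  have hsub : (closedNbhd G u ∆ closedNbhd G v) ∩ S ⊆ {b} := by
    rintro x ⟨hx, hxS⟩
    rcases h hx with rfl | rfl
    exacts [absurd hxS ha, rfl]
  have hle := (Set.ncard_le_ncard hsub).trans (Set.ncard_singleton b).le
  have := kDistinguished_iff.1 (hS.2 u v huv)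
  omega

theorem isRedIC_univ [Finite V] (hnbr : ∀ v, ∃ w, G.Adj v w)
    (hadj : ∀ u v, G.Adj u v → 2 ≤ (closedNbhd G u ∆ closedNbhd G v).ncard) :
    IsRedIC G Set.univ := by
  refine ⟨fun v => ?_, fun u v huv => ?_⟩
  · obtain ⟨w, hw⟩ := hnbr v
    rw [kDominated, Set.inter_univ]
    exact (Set.one_lt_ncard (Set.toFinite _)).2
      ⟨v, Set.mem_insert v _, w, Set.mem_insert_of_mem v hw, G.ne_of_adj hw⟩
  · rw [kDistinguished_iff, Set.inter_univ]
    by_cases h : G.Adj u v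
    · exact hadj u v h
    · have hv := self_mem_symmDiff_closedNbhd huv.symm (fun h' => h (G.adj_symm h'))
      rw [symmDiff_comm] at hv
      exact (Set.one_lt_ncard (Set.toFinite _)).2
        ⟨u, self_mem_symmDiff_closedNbhd huv h, v, hv, huv⟩

theorem redIC_eq_card (huniv : IsRedIC G Set.univ) (h : ∀ S, IsRedIC G S → S = Set.univ) :
    redIC G = Nat.card V := by
  have hcodes : {n | ∃ S : Set V, IsRedIC G S ∧ S.ncard = n} = {Nat.card V} := by
    ext n
    constructor
    · rintro ⟨S, hS, rfl⟩
      rw [h S hS, Set.ncard_univ, Set.mem_singleton_iff]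
    · rintro rfl
      exact ⟨Set.univ, huniv, Set.ncard_univ V⟩
  rw [redIC, hcodes, csInf_singleton]

end Graph

section Cycle

open SimpleGraph Fin.CommRing

theorem Fin.natCast_ne_zero_of_lt {n k : ℕ} [NeZero n] (hk : 0 < k) (hkn : k < n) :
    (k : Fin n) ≠ 0 := by
  rw [Ne, Fin.natCast_eq_zero]
  exact fun h => (Nat.le_of_dvd hk h).not_gt hkn

variable {n : ℕ}

theorem sub_one_ne_add_two (hn : 2 ≤ n) (v : Fin (n + 2)) : v - 1 ≠ v + 2 := fun h =>
  Fin.natCast_ne_zero_of_lt (n := n + 2) (k := 3) (by omega) (by omega)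
    (by push_cast; linear_combination -h)

theorem closedNbhd_cycleGraph (v : Fin (n + 2)) :
    closedNbhd (cycleGraph (n + 2)) v = {v - 1, v, v + 1} := by
  rw [closedNbhd, cycleGraph_neighborSet, Set.insert_comm]

theorem symmDiff_closedNbhd_cycleGraph_add_one (hn : 2 ≤ n) (v : Fin (n + 2)) :
    closedNbhd (cycleGraph (n + 2)) v ∆ closedNbhd (cycleGraph (n + 2)) (v + 1) =
      {v - 1, v + 2} := by
  have h2 : (2 : Fin (n + 2)) ≠ 0 := by
    exact_mod_cast Fin.natCast_ne_zero_of_lt (n := n + 2) (k := 2) (by omega) (by omega)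
  rw [closedNbhd_cycleGraph, closedNbhd_cycleGraph, add_sub_cancel_right, add_assoc,
    one_add_one_eq_two]
  ext x
  simp only [Set.mem_symmDiff, Set.mem_insert_iff, Set.mem_singleton_iff]
  constructor
  · rintro (⟨hx | hx | hx, hx'⟩ | ⟨hx | hx | hx, hx'⟩) <;> tauto
  · rintro (rfl | rfl)
    · refine Or.inl ⟨Or.inl rfl, ?_⟩
      rintro (h | h | h)
      exacts [one_ne_zero (by linear_combination -h), h2 (by linear_combination -h),
        sub_one_ne_add_two hn v h]
    · refine Or.inr ⟨Or.inr (Or.inr rfl), ?_⟩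
      rintro (h | h | h)
      exacts [sub_one_ne_add_two hn v h.symm, h2 (by linear_combination h),
        one_ne_zero (by linear_combination h)]

theorem ncard_symmDiff_closedNbhd_cycleGraph_of_adj (hn : 2 ≤ n) {u v : Fin (n + 2)}
    (h : (cycleGraph (n + 2)).Adj u v) :
    (closedNbhd (cycleGraph (n + 2)) u ∆ closedNbhd (cycleGraph (n + 2)) v).ncard = 2 := by
  rcases cycleGraph_adj.1 h with h | h <;> rw [sub_eq_iff_eq_add'] at h <;> subst h
  · rw [symmDiff_comm, symmDiff_closedNbhd_cycleGraph_add_one hn,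
      Set.ncard_pair (sub_one_ne_add_two hn v)]
  · rw [symmDiff_closedNbhd_cycleGraph_add_one hn, Set.ncard_pair (sub_one_ne_add_two hn u)]

theorem isRedIC_univ_cycleGraph (hn : 2 ≤ n) : IsRedIC (cycleGraph (n + 2)) Set.univ :=
  isRedIC_univ (fun v => ⟨v + 1, cycleGraph_adj.2 (Or.inr (add_sub_cancel_left v 1))⟩)
    fun _ _ h => (ncard_symmDiff_closedNbhd_cycleGraph_of_adj hn h).ge

theorem IsRedIC.eq_univ_of_cycleGraph (hn : 2 ≤ n) {S : Set (Fin (n + 2))}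
    (hS : IsRedIC (cycleGraph (n + 2)) S) : S = Set.univ := by
  refine Set.eq_univ_of_forall fun v => ?_
  have hv := hS.mem_of_symmDiff_closedNbhd_subset (add_ne_left.2 one_ne_zero).symm
    (symmDiff_closedNbhd_cycleGraph_add_one hn (v + 1)).subset
  rwa [add_sub_cancel_right] at hv

end Cycle

theorem stmt_13 (n : ℕ) (hn : 4 ≤ n) :
    (∀ S : Set (Fin n), IsRedIC (SimpleGraph.cycleGraph n) S → S = Set.univ) ∧
    redIC (SimpleGraph.cycleGraph n) = n := by
  obtain ⟨n, rfl⟩ : ∃ m, n = m + 2 := ⟨n - 2, by omega⟩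
  have hn : 2 ≤ n := by omega
  have hcodes (S : Set (Fin (n + 2))) (hS : IsRedIC (SimpleGraph.cycleGraph (n + 2)) S) :
      S = Set.univ :=
    hS.eq_univ_of_cycleGraph hn
  exact ⟨hcodes, by rw [redIC_eq_card (isRedIC_univ_cycleGraph hn) hcodes, Nat.card_fin]⟩
end

section
/- Let T be a finite tree with at least 4 vertices. Then T admits a redundant identifying code if and only if every support vertex of T has degree at least 3. -/
open scoped symmDiff

variable {V : Type*}

private lemma no_triangle (G : SimpleGraph V) (hA : G.IsAcyclic) {a b c : V}
    (hab : G.Adj a b) (hbc : G.Adj b c) (hac : G.Adj a c) : False := by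
  have hc : (SimpleGraph.Walk.cons hab (SimpleGraph.Walk.cons hbc
      (SimpleGraph.Walk.cons hac.symm SimpleGraph.Walk.nil))).IsCycle := by
    simp [SimpleGraph.Walk.isCycle_def, SimpleGraph.Walk.isTrail_def,
      hab.ne, hbc.ne, hac.ne, hab.ne', hbc.ne', hac.ne', Sym2.eq, Sym2.rel_iff]
  exact hA _ hc

theorem stmt_14 {V : Type*} [Fintype V] (G : SimpleGraph V) (hT : G.IsTree)
    (hn : 4 ≤ Fintype.card V) :
    (∃ S : Set V, IsRedIC G S) ↔ (∀ v : V, IsSupport G v → 3 ≤ deg G v) := by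
  have hmem : ∀ (x v : V), x ∈ closedNbhd G v ↔ x = v ∨ G.Adj v x := by
    intro x v; simp [closedNbhd]
  constructor
  · rintro ⟨S, hdom, hdis⟩ v ⟨u, hadj, hleaf⟩
    -- N(u) = {v}
    have hNu : G.neighborSet u = {v} := by
      obtain ⟨a, ha⟩ := Set.ncard_eq_one.mp hleaf
      have hv : v ∈ G.neighborSet u := hadj.symm
      rw [ha] at hv ⊢
      rw [Set.mem_singleton_iff] at hv; rw [hv]
    have hsub : closedNbhd G u ∩ S ≤ closedNbhd G v ∩ S := by
      rintro x ⟨hx1, hx2⟩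
      refine ⟨?_, hx2⟩
      rw [hmem] at hx1 ⊢
      rcases hx1 with rfl | hx1
      · exact Or.inr hadj
      · have hx1' : x ∈ G.neighborSet u := hx1
        rw [hNu, Set.mem_singleton_iff] at hx1'
        subst hx1'; exact Or.inl rfl
    have h2 := hdis u v hadj.ne'
    rw [kDistinguished, symmDiff_of_le hsub] at h2
    obtain ⟨x, y, hx, hy, hxy⟩ := (Set.one_lt_ncard_iff (Set.toFinite _)).mp h2
    -- x, y ∈ N(v), ≠ u
    have key : ∀ z ∈ (closedNbhd G v ∩ S) \ (closedNbhd G u ∩ S),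
        z ∈ G.neighborSet v ∧ z ≠ u := by
      rintro z ⟨⟨hz1, hz2⟩, hz3⟩
      have hzu : z ∉ closedNbhd G u := fun h => hz3 ⟨h, hz2⟩
      rw [hmem] at hzu hz1
      push_neg at hzu
      rcases hz1 with rfl | hz1
      · exact absurd hadj.symm hzu.2
      · exact ⟨hz1, hzu.1⟩
    obtain ⟨hxv, hxu⟩ := key x hx
    obtain ⟨hyv, hyu⟩ := key y hy
    have hsub3 : ({u, x, y} : Set V) ⊆ G.neighborSet v := by
      rintro z (rfl | rfl | rfl)
      · exact hadj
      · exact hxv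
      · exact hyv
    have h3 : ({u, x, y} : Set V).ncard = 3 := by
      rw [Set.ncard_insert_of_notMem (by simp [Ne.symm hxu, Ne.symm hyu]),
        Set.ncard_insert_of_notMem (by simp [hxy]), Set.ncard_singleton]
    calc (3 : ℕ) = ({u, x, y} : Set V).ncard := h3.symm
      _ ≤ _ := Set.ncard_le_ncard hsub3 (Set.toFinite _)
  · intro hsup
    refine ⟨Set.univ, ?_, ?_⟩
    · intro v
      have : ∃ w, G.Adj v w := by
        obtain ⟨w, hw⟩ := Fintype.exists_ne_of_one_lt_card (by omega) v
        obtain ⟨p⟩ := hT.isConnected.preconnected v w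
        cases p with
        | nil => exact absurd rfl hw.symm
        | cons h _ => exact ⟨_, h⟩
      obtain ⟨w, hw⟩ := this
      rw [kDominated, Set.inter_univ]
      rw [show (2:ℕ) = 1 + 1 from rfl]
      refine (Set.one_lt_ncard_iff (Set.toFinite _)).mpr ⟨v, w, ?_, ?_, hw.ne⟩
      · rw [hmem]; exact Or.inl rfl
      · rw [hmem]; exact Or.inr hw
    · intro u v huv
      rw [kDistinguished, Set.inter_univ, Set.inter_univ]
      refine (Set.one_lt_ncard_iff (Set.toFinite _)).mpr ?_
      by_cases hadj : G.Adj u v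
      · -- helper: private neighbors
        have priv : ∀ w, G.Adj u w → w ≠ v → w ∉ closedNbhd G v := by
          intro w hw hwv h
          rw [hmem] at h
          rcases h with rfl | h
          · exact hwv rfl
          · exact no_triangle G hT.IsAcyclic hadj h hw
        have priv' : ∀ w, G.Adj v w → w ≠ u → w ∉ closedNbhd G u := by
          intro w hw hwu h
          rw [hmem] at h
          rcases h with rfl | h
          · exact hwu rfl
          · exact no_triangle G hT.IsAcyclic hadj.symm h hw
        by_cases hlu : IsLeaf G u
        · -- v is support, deg v ≥ 3, two private nbrs of v other than u
          have hdv : 3 ≤ deg G v := hsup v ⟨u, hadj.symm, hlu⟩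
          have h2 : 2 ≤ (G.neighborSet v \ {u}).ncard := by
            have := Set.ncard_insert_le u (G.neighborSet v \ {u})
            have hsub : G.neighborSet v ⊆ insert u (G.neighborSet v \ {u}) := by
              intro z hz; by_cases hzu : z = u
              · exact hzu ▸ Set.mem_insert _ _
              · exact Set.mem_insert_of_mem _ ⟨hz, hzu⟩
            have := Set.ncard_le_ncard hsub (Set.toFinite _)
            have := Set.ncard_insert_le u (G.neighborSet v \ {u})
            unfold deg at hdv; omega
          obtain ⟨x, y, hx, hy, hxy⟩ := (Set.one_lt_ncard_iff (Set.toFinite _)).mp h2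
          refine ⟨x, y, ?_, ?_, hxy⟩ <;>
          · rw [Set.mem_symmDiff]
            first
            | exact Or.inr ⟨by rw [hmem]; exact Or.inr hx.1, priv' x hx.1 hx.2⟩
            | exact Or.inr ⟨by rw [hmem]; exact Or.inr hy.1, priv' y hy.1 hy.2⟩
        · by_cases hlv : IsLeaf G v
          · have hdu : 3 ≤ deg G u := hsup u ⟨v, hadj, hlv⟩
            have h2 : 2 ≤ (G.neighborSet u \ {v}).ncard := by
              have hsub : G.neighborSet u ⊆ insert v (G.neighborSet u \ {v}) := by
                intro z hz; by_cases hzv : z = v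
                · exact hzv ▸ Set.mem_insert _ _
                · exact Set.mem_insert_of_mem _ ⟨hz, hzv⟩
              have := Set.ncard_le_ncard hsub (Set.toFinite _)
              have := Set.ncard_insert_le v (G.neighborSet u \ {v})
              unfold deg at hdu; omega
            obtain ⟨x, y, hx, hy, hxy⟩ := (Set.one_lt_ncard_iff (Set.toFinite _)).mp h2
            refine ⟨x, y, ?_, ?_, hxy⟩ <;>
            · rw [Set.mem_symmDiff]
              first
              | exact Or.inl ⟨by rw [hmem]; exact Or.inr hx.1, priv x hx.1 hx.2⟩
              | exact Or.inl ⟨by rw [hmem]; exact Or.inr hy.1, priv y hy.1 hy.2⟩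
          · -- neither leaf: each has a private neighbor
            have hdu : 2 ≤ deg G u := by
              have h1 : 1 ≤ deg G u :=
                (Set.ncard_pos (Set.toFinite _)).mpr ⟨v, hadj⟩
              have : deg G u ≠ 1 := hlu
              omega
            have hdv : 2 ≤ deg G v := by
              have h1 : 1 ≤ deg G v :=
                (Set.ncard_pos (Set.toFinite _)).mpr ⟨u, hadj.symm⟩
              have : deg G v ≠ 1 := hlv
              omega
            obtain ⟨x, hx, hxv⟩ := Set.exists_ne_of_one_lt_ncard hdu v
            obtain ⟨y, hy, hyu⟩ := Set.exists_ne_of_one_lt_ncard hdv u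
            have hxmem : x ∉ closedNbhd G v := priv x hx hxv
            have hymem : y ∉ closedNbhd G u := priv' y hy hyu
            refine ⟨x, y, ?_, ?_, ?_⟩
            · rw [Set.mem_symmDiff]
              exact Or.inl ⟨by rw [hmem]; exact Or.inr hx, hxmem⟩
            · rw [Set.mem_symmDiff]
              exact Or.inr ⟨by rw [hmem]; exact Or.inr hy, hymem⟩
            · rintro rfl
              exact hxmem (by rw [hmem]; exact Or.inr hy)
      · -- non-adjacent: u and v themselves
        refine ⟨u, v, ?_, ?_, huv⟩
        · rw [Set.mem_symmDiff]
          refine Or.inl ⟨by rw [hmem]; exact Or.inl rfl, ?_⟩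
          rw [hmem]; push_neg
          exact ⟨huv, fun h => hadj h.symm⟩
        · rw [Set.mem_symmDiff]
          refine Or.inr ⟨by rw [hmem]; exact Or.inl rfl, ?_⟩
          rw [hmem]; push_neg
          exact ⟨huv.symm, hadj⟩
end

section
/- Let T be a finite tree on n ≥ 4 vertices that admits a redundant identifying code. Then ⌈4(n+1)/5⌉ ≤ RED:IC(T) ≤ n. -/
open scoped symmDiff

variable {V : Type*}

/-!
Root the tree at a vertex `r ∉ S` with parent map `p`, and call `s ∈ S` a top when `p s ∉ S`:
the tops are the roots of the components of the subforest induced by `S`. Each vertex outside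
`S` has two neighbours in `S`, and every such edge is the parent edge either of a top or of a
vertex outside `S` other than `r`; hence `|V \ S| < #tops`. Below each top `t` lie an `S`-child
`u` of `t` and the two vertices of `S` separating `t` from `u`, all at depth at most two, so
`4 · #tops ≤ |S|`. Thus `4 |V \ S| + 4 ≤ |S|`, that is `4 n + 4 ≤ 5 |S|`; if `S = V` this is
`n ≥ 4`.
-/

open Finset SimpleGraph

variable {G : SimpleGraph V}

lemma SimpleGraph.IsTree.exists_parent (hG : G.IsTree) (r : V) :
    ∃ p : V → V, p r = r ∧ ∀ ⦃u v⦄, G.Adj u v → p u = v ∨ p v = u := by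
  choose P hP using fun v => (hG.existsUnique_path v r).exists
  refine ⟨fun v => (P v).snd, ?_, fun u v huv => ?_⟩
  · simp [Walk.eq_nil_iff_nil.mpr (Walk.isPath_iff_nil.mp (hP r))]
  by_cases hu : u ∈ (P v).support
  · exact .inr (hG.isAcyclic.eq_snd_of_adj_start (hP v) huv.symm hu).symm
  · have hv : v ∈ (P u).support := by
      simpa using hG.isAcyclic.mem_support_of_ne_mem_support_of_adj_of_isPath
        (hP u).reverse (hP v).reverse huv (by simpa using hu)
    exact .inl (hG.isAcyclic.eq_snd_of_adj_start (hP u) huv hv).symm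

section Counting

variable [DecidableEq V] [DecidableRel G.Adj] {S : Finset V} {p : V → V}

lemma card_compl_lt_card_filter_parent_notMem [Fintype V]
    (hp : ∀ ⦃u v⦄, G.Adj u v → p u = v ∨ p v = u)
    {r : V} (hr : r ∉ S) (hpr : p r = r)
    (hdom : ∀ v ∉ S, 2 ≤ #{w ∈ S | w = v ∨ G.Adj v w}) :
    #Sᶜ < #{s ∈ S | p s ∉ S} := by
  set tops := {s ∈ S | p s ∉ S}
  have hlocal : ∀ h ∉ S,
      #{w ∈ S | w = h ∨ G.Adj h w} ≤ #{s ∈ tops | p s = h} + if p h ∈ S then 1 else 0 := by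
    intro h hh
    have hsub : {w ∈ S | w = h ∨ G.Adj h w} ⊆
        {s ∈ tops | p s = h} ∪ ({p h} : Finset V).filter (· ∈ S) := by
      intro w hw
      simp only [mem_filter, mem_union, mem_singleton, tops] at hw ⊢
      obtain ⟨hwS, rfl | hadj⟩ := hw
      · exact absurd hwS hh
      · rcases hp hadj with rfl | rfl <;> tauto
    refine (card_le_card hsub).trans ((card_union_le _ _).trans ?_)
    rw [filter_singleton]
    split_ifs <;> simp
  have hsum : 2 * #Sᶜ ≤ #tops + #{h ∈ Sᶜ | p h ∈ S} := calc
    2 * #Sᶜ = ∑ h ∈ Sᶜ, 2 := by rw [sum_const, smul_eq_mul, mul_comm]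
    _ ≤ ∑ h ∈ Sᶜ, (#{s ∈ tops | p s = h} + if p h ∈ S then 1 else 0) :=
      sum_le_sum fun h hh => (hdom h (mem_compl.mp hh)).trans (hlocal h (mem_compl.mp hh))
    _ = #tops + #{h ∈ Sᶜ | p h ∈ S} := by
      rw [sum_add_distrib, sum_card_fiberwise_eq_card_filter, sum_boole, Nat.cast_id,
        filter_true_of_mem fun s hs => mem_compl.mpr (mem_filter.mp hs).2]
  have hroot : #{h ∈ Sᶜ | p h ∈ S} < #Sᶜ :=
    card_lt_card (filter_ssubset.mpr ⟨r, mem_compl.mpr hr, by rwa [hpr]⟩)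
  omega

lemma four_mul_card_filter_parent_notMem_le (hp : ∀ ⦃u v⦄, G.Adj u v → p u = v ∨ p v = u)
    (hdom : ∀ v ∈ S, 2 ≤ #{w ∈ S | w = v ∨ G.Adj v w})
    (hsep : ∀ u v, G.Adj u v → 2 ≤ #{w ∈ S | w ≠ u ∧ w ≠ v ∧ (G.Adj u w ∨ G.Adj v w)}) :
    4 * #{s ∈ S | p s ∉ S} ≤ #S := by
  set tops := {s ∈ S | p s ∉ S}
  -- `top` maps every vertex of `S` at depth at most two below a top `t` to `t`
  let top : V → V := fun x => if p x ∉ S then x else if p (p x) ∉ S then p x else p (p x)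
  have hfiber : ∀ t ∈ tops, 4 ≤ #{x ∈ S | top x = t} := by
    intro t ht
    obtain ⟨htS, hpt⟩ := mem_filter.mp ht
    obtain ⟨u, hu, hut⟩ := exists_mem_ne (hdom t htS) t
    obtain ⟨huS, rfl | htu⟩ := mem_filter.mp hu
    · exact absurd rfl hut
    have hpu : p u = t := (hp htu).resolve_left fun h => hpt (h ▸ huS)
    have hbelow : ∀ w ∈ S, w ≠ t → w ≠ u → (G.Adj t w ∨ G.Adj u w) → top w = t := by
      intro w hwS hwt hwu hadj
      rcases hadj with hadj | hadj
      · rcases hp hadj with h | h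
        · exact absurd (h ▸ hwS) hpt
        · simp [top, h, htS, hpt]
      · rcases hp hadj with h | h
        · exact absurd (hpu ▸ h).symm hwt
        · simp [top, h, huS, hpu, htS]
    obtain ⟨a, ha, b, hb, hab⟩ := one_lt_card.mp (hsep t u htu)
    simp only [mem_filter] at ha hb
    calc 4 = #{t, u, a, b} := by
          rw [card_insert_of_notMem, card_insert_of_notMem, card_pair hab] <;>
            simp [Ne.symm, *]
      _ ≤ #{x ∈ S | top x = t} := by
        refine card_le_card fun x hx => ?_
        simp only [mem_insert, mem_singleton] at hx
        rcases hx with rfl | rfl | rfl | rfl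
        · simp [top, htS, hpt]
        · simp [top, huS, hpu, htS, hpt]
        · exact mem_filter.mpr ⟨ha.1, hbelow x ha.1 ha.2.1 ha.2.2.1 ha.2.2.2⟩
        · exact mem_filter.mpr ⟨hb.1, hbelow x hb.1 hb.2.1 hb.2.2.1 hb.2.2.2⟩
  calc 4 * #tops = ∑ t ∈ tops, 4 := by rw [sum_const, smul_eq_mul, mul_comm]
    _ ≤ ∑ t ∈ tops, #{x ∈ S | top x = t} := sum_le_sum hfiber
    _ = #{x ∈ S | top x ∈ tops} := sum_card_fiberwise_eq_card_filter _ _ _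
    _ ≤ #S := card_filter_le _ _

lemma closedNbhd_inter_coe (v : V) : closedNbhd G v ∩ ↑S = ↑{w ∈ S | w = v ∨ G.Adj v w} := by
  ext w
  simp [closedNbhd, and_comm]

lemma IsRedIC.two_le_card_closedNbhd (hS : IsRedIC G ↑S) (v : V) :
    2 ≤ #{w ∈ S | w = v ∨ G.Adj v w} := by
  have h := hS.1 v
  rwa [kDominated, closedNbhd_inter_coe, Set.ncard_coe_finset] at h

lemma IsRedIC.two_le_card_separating (hS : IsRedIC G ↑S) {u v : V} (huv : G.Adj u v) :
    2 ≤ #{w ∈ S | w ≠ u ∧ w ≠ v ∧ (G.Adj u w ∨ G.Adj v w)} := by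
  refine (hS.2 u v huv.ne).trans ?_
  rw [← Set.ncard_coe_finset]
  refine Set.ncard_le_ncard (fun w hw => ?_) (Set.toFinite _)
  simp only [closedNbhd_inter_coe, Set.mem_symmDiff, coe_filter, Set.mem_ofPred_eq] at hw ⊢
  have := huv.symm
  rcases hw with ⟨⟨hwS, rfl | hw⟩, hv⟩ | ⟨⟨hwS, rfl | hw⟩, hu⟩ <;> aesop

lemma IsRedIC.four_mul_card_compl_add_four_le [Fintype V] (hT : G.IsTree) (hS : IsRedIC G ↑S)
    (hSc : Sᶜ.Nonempty) : 4 * #Sᶜ + 4 ≤ #S := by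
  obtain ⟨r, hr⟩ := hSc
  obtain ⟨p, hpr, hp⟩ := hT.exists_parent r
  have htops := card_compl_lt_card_filter_parent_notMem hp (mem_compl.mp hr) hpr
    fun v _ => hS.two_le_card_closedNbhd v
  have hcluster := four_mul_card_filter_parent_notMem_le hp
    (fun v _ => hS.two_le_card_closedNbhd v) fun _ _ => hS.two_le_card_separating
  omega

end Counting

lemma IsRedIC.four_mul_card_add_four_le [Fintype V] (hT : G.IsTree) (hn : 4 ≤ Fintype.card V)
    {S : Set V} (hS : IsRedIC G S) : 4 * Fintype.card V + 4 ≤ 5 * S.ncard := by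
  classical
  lift S to Finset V using S.toFinite
  rw [Set.ncard_coe_finset]
  have hcompl := S.card_add_card_compl
  rcases Sᶜ.eq_empty_or_nonempty with hSc | hSc
  · rw [hSc, card_empty] at hcompl
    omega
  · have := hS.four_mul_card_compl_add_four_le hT hSc
    omega

/-- `(4 * (n + 1) + 4) / 5` is the natural-number ceiling `⌈4(n+1)/5⌉`. -/
theorem stmt_16 {V : Type*} [Fintype V] (G : SimpleGraph V) (hT : G.IsTree)
    (hn : 4 ≤ Fintype.card V) (hex : ∃ S : Set V, IsRedIC G S) :
    (4 * (Fintype.card V + 1) + 4) / 5 ≤ redIC G ∧ redIC G ≤ Fintype.card V := by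
  obtain ⟨S₀, hS₀⟩ := hex
  constructor
  · refine le_csInf ⟨_, S₀, hS₀, rfl⟩ ?_
    rintro _ ⟨S, hS, rfl⟩
    have := hS.four_mul_card_add_four_le hT hn
    omega
  · calc redIC G ≤ S₀.ncard := Nat.sInf_le ⟨S₀, hS₀, rfl⟩
      _ ≤ Fintype.card V := by simpa using S₀.ncard_le_card
end

section
/- Let G be a finite cubic (3-regular) simple graph and let S be a redundant identifying code of G. Then 7·|S| ≥ 4·|V(G)|, i.e., the density of S in G is at least 4/7. -/
open scoped symmDiff

variable {V : Type*}

/-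
Let `A = V \ S`. Domination gives every vertex of `A` at least two neighbours in `S` and every
vertex of `S` at least one. If `s ∈ S` has exactly one neighbour `t` in `S`, then `N[s] ∩ S = {s, t}`
and 2-distinguishing `s` from `t` forces the other two neighbours of `t` into `S`. Discharging,
each `t ∈ S` with three neighbours in `S` pays for the at most three such `s` around it, so on
average a vertex of `S` has at least `3/2` neighbours in `S`, hence at most `3/2` in `A`.
Counting the `S`–`A` edges from both sides gives `2|A| ≤ (3/2)|S|`, i.e. `4|V| ≤ 7|S|`.
-/

open Finset

namespace SimpleGraph

variable {G : SimpleGraph V} [Fintype V] [DecidableRel G.Adj] [DecidableEq V]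

theorem card_neighborFinset_inter_le {d : ℕ} (hG : G.IsRegularOfDegree d) (v : V)
    (X : Finset V) : #(G.neighborFinset v ∩ X) ≤ d :=
  hG.degree_eq v ▸ card_le_card inter_subset_left

theorem sum_card_neighborFinset_inter_comm (X Y : Finset V) :
    ∑ x ∈ X, #(G.neighborFinset x ∩ Y) = ∑ y ∈ Y, #(G.neighborFinset y ∩ X) := by
  have hfilter : ∀ x (Z : Finset V), G.neighborFinset x ∩ Z = {z ∈ Z | G.Adj x z} := by
    intro x Z; ext; simp [and_comm]
  simp_rw [hfilter]
  convert sum_card_bipartiteAbove_eq_sum_card_bipartiteBelow G.Adj using 3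
  · rfl
  · exact filter_congr fun _ _ ↦ G.adj_comm _ _

end SimpleGraph

variable {G : SimpleGraph V} [Fintype V] [DecidableRel G.Adj]

theorem deg_eq_degree (v : V) : deg G v = G.degree v :=
  Set.ncard_eq_toFinset_card' _

variable [DecidableEq V]

theorem closedNbhd_eq_coe (v : V) : closedNbhd G v = ↑(insert v (G.neighborFinset v)) := by
  ext; simp [closedNbhd]

variable {S : Finset V}

theorem closedNbhd_inter_ncard (v : V) :
    (closedNbhd G v ∩ ↑S).ncard = #(insert v (G.neighborFinset v) ∩ S) := by
  rw [closedNbhd_eq_coe, ← coe_inter, Set.ncard_coe_finset]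

theorem two_le_card_neighborFinset_inter_of_notMem {v : V} (hv : v ∉ S)
    (h : kDominated G ↑S 2 v) : 2 ≤ #(G.neighborFinset v ∩ S) := by
  rwa [kDominated, closedNbhd_inter_ncard, insert_inter_of_notMem hv] at h

theorem one_le_card_neighborFinset_inter_of_mem {v : V} (hv : v ∈ S)
    (h : kDominated G ↑S 2 v) : 1 ≤ #(G.neighborFinset v ∩ S) := by
  rw [kDominated, closedNbhd_inter_ncard, insert_inter_of_mem hv] at h
  have := card_insert_le v (G.neighborFinset v ∩ S)
  omega

theorem three_le_card_neighborFinset_inter {s t : V} (hs : s ∈ S)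
    (hst : G.neighborFinset s ∩ S = {t}) (h : kDistinguished G ↑S 2 s t) :
    3 ≤ #(G.neighborFinset t ∩ S) := by
  have htS : t ∈ G.neighborFinset s ∩ S := hst ▸ mem_singleton_self t
  have hadj : G.Adj s t := (G.mem_neighborFinset s t).1 (mem_inter.1 htS).1
  have hsN : s ∈ G.neighborFinset t ∩ S :=
    mem_inter.2 ⟨(G.mem_neighborFinset t s).2 hadj.symm, hs⟩
  have hle : {s, t} ⊆ insert t (G.neighborFinset t ∩ S) := by
    simp [insert_subset_iff, hsN]
  have hsub :
      insert t (G.neighborFinset t ∩ S) \ {s, t} ⊆ (G.neighborFinset t ∩ S).erase s := by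
    intro u; simp only [mem_sdiff, mem_insert, mem_singleton, mem_erase]; tauto
  rw [kDistinguished, closedNbhd_eq_coe, closedNbhd_eq_coe, ← coe_inter, ← coe_inter,
    ← coe_symmDiff, Set.ncard_coe_finset, insert_inter_of_mem hs,
    insert_inter_of_mem (mem_inter.1 htS).2, hst, symmDiff_of_le hle] at h
  have := (h.trans (card_le_card hsub)).trans_eq (card_erase_of_mem hsN)
  omega

namespace IsRedIC

theorem card_filter_eq_one_le {d : ℕ} (hG : G.IsRegularOfDegree d) (hS : IsRedIC G ↑S) :
    #{s ∈ S | #(G.neighborFinset s ∩ S) = 1}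
      ≤ d * #{s ∈ S | 3 ≤ #(G.neighborFinset s ∩ S)} := by
  set T := {s ∈ S | #(G.neighborFinset s ∩ S) = 1}
  set U := {s ∈ S | 3 ≤ #(G.neighborFinset s ∩ S)}
  have hTU : ∀ s ∈ T, 1 ≤ #(G.neighborFinset s ∩ U) := by
    intro s hs
    obtain ⟨hsS, hs1⟩ := mem_filter.1 hs
    obtain ⟨t, ht⟩ := card_eq_one.1 hs1
    obtain ⟨hadj, htS⟩ := mem_inter.1 (ht ▸ mem_singleton_self t)
    have htU : t ∈ U := mem_filter.2 ⟨htS,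
      three_le_card_neighborFinset_inter hsS ht (hS.2 s t ((G.mem_neighborFinset s t).1 hadj).ne)⟩
    exact card_pos.2 ⟨t, mem_inter.2 ⟨hadj, htU⟩⟩
  calc #T = #T • 1 := by rw [smul_eq_mul, mul_one]
    _ ≤ ∑ s ∈ T, #(G.neighborFinset s ∩ U) := card_nsmul_le_sum _ _ _ hTU
    _ = ∑ u ∈ U, #(G.neighborFinset u ∩ T) := G.sum_card_neighborFinset_inter_comm T U
    _ ≤ #U • d := sum_le_card_nsmul _ _ _ fun u _ ↦ G.card_neighborFinset_inter_le hG u T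
    _ = d * #U := by rw [smul_eq_mul, mul_comm]

theorem three_mul_card_le_sum (hG : G.IsRegularOfDegree 3) (hS : IsRedIC G ↑S) :
    3 * #S ≤ 2 * ∑ s ∈ S, #(G.neighborFinset s ∩ S) := by
  -- the charge `2 |N(s) ∩ S| - 3` is `-1` with one `S`-neighbour, `3` with three, else `≥ 0`
  have hcharge : ∀ s ∈ S, 3 + 3 * (if 3 ≤ #(G.neighborFinset s ∩ S) then 1 else 0)
      ≤ 2 * #(G.neighborFinset s ∩ S) + if #(G.neighborFinset s ∩ S) = 1 then 1 else 0 := by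
    intro s hs
    have := one_le_card_neighborFinset_inter_of_mem hs (hS.1 s)
    have := G.card_neighborFinset_inter_le hG s S
    split_ifs <;> omega
  have hsum := sum_le_sum hcharge
  simp only [sum_add_distrib, ← mul_sum, ← card_filter, sum_const, smul_eq_mul] at hsum
  have := hS.card_filter_eq_one_le hG
  omega

theorem two_mul_card_compl_add_sum_le {d : ℕ} (hG : G.IsRegularOfDegree d)
    (hS : IsRedIC G ↑S) :
    2 * #Sᶜ + ∑ s ∈ S, #(G.neighborFinset s ∩ S) ≤ d * #S := by
  have hcompl : #Sᶜ • 2 ≤ ∑ a ∈ Sᶜ, #(G.neighborFinset a ∩ S) :=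
    card_nsmul_le_sum _ _ _ fun a ha ↦
      two_le_card_neighborFinset_inter_of_notMem (mem_compl.1 ha) (hS.1 a)
  calc 2 * #Sᶜ + ∑ s ∈ S, #(G.neighborFinset s ∩ S)
      ≤ ∑ a ∈ Sᶜ, #(G.neighborFinset a ∩ S) + ∑ s ∈ S, #(G.neighborFinset s ∩ S) := by
        rw [smul_eq_mul, mul_comm] at hcompl; gcongr
    _ = ∑ s ∈ S, (#(G.neighborFinset s ∩ S) + #(G.neighborFinset s \ S)) := by
        rw [G.sum_card_neighborFinset_inter_comm, sum_add_distrib, add_comm]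
        simp only [sdiff_eq_inter_compl]
    _ = d * #S := by
        simp only [card_inter_add_card_sdiff, G.card_neighborFinset_eq_degree, hG.degree_eq,
          sum_const, smul_eq_mul, mul_comm]

theorem four_mul_card_le_seven_mul_card (hG : G.IsRegularOfDegree 3) (hS : IsRedIC G ↑S) :
    4 * Fintype.card V ≤ 7 * #S := by
  have := hS.three_mul_card_le_sum hG
  have := hS.two_mul_card_compl_add_sum_le hG
  have := card_add_card_compl S
  omega

end IsRedIC

theorem stmt_18 {V : Type*} [Fintype V] (G : SimpleGraph V)
    (hcubic : ∀ v : V, deg G v = 3) (S : Set V) (hS : IsRedIC G S) :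
    4 * Fintype.card V ≤ 7 * S.ncard := by
  classical
  have hG : G.IsRegularOfDegree 3 := fun v ↦ deg_eq_degree (G := G) v ▸ hcubic v
  rw [Set.ncard_eq_toFinset_card']
  exact IsRedIC.four_mul_card_le_seven_mul_card hG (by rwa [Set.coe_toFinset])
end

section
/- Every finite cubic (3-regular) simple graph with no closed twins admits a redundant identifying code; in particular, for a finite cubic graph G, a redundant identifying code exists if and only if an identifying code exists. -/
open scoped symmDiff

variable {V : Type*}

lemma univ_redIC {V : Type*} [Fintype V] (G : SimpleGraph V)
    (hcubic : ∀ v : V, deg G v = 3)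
    (h : ∀ u v : V, ¬ ClosedTwins G u v) : IsRedIC G Set.univ := by
  have hc : ∀ v : V, (closedNbhd G v).ncard = 4 := by
    intro v
    have hv : v ∉ G.neighborSet v := by simp
    rw [closedNbhd, Set.ncard_insert_of_notMem hv (Set.toFinite _), ← deg, hcubic]
  constructor
  · intro v
    unfold kDominated
    rw [Set.inter_univ, hc]; omega
  · intro u v huv
    unfold kDistinguished
    rw [Set.inter_univ, Set.inter_univ]
    have hne : closedNbhd G u ≠ closedNbhd G v := fun hEq => h u v ⟨huv, hEq⟩
    have h1 : (closedNbhd G u \ closedNbhd G v).Nonempty := by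
      rw [Set.diff_nonempty]
      intro hsub
      exact hne (Set.eq_of_subset_of_ncard_le hsub (by rw [hc, hc]) (Set.toFinite _))
    have h2 : (closedNbhd G v \ closedNbhd G u).Nonempty := by
      rw [Set.diff_nonempty]
      intro hsub
      exact hne.symm (Set.eq_of_subset_of_ncard_le hsub (by rw [hc, hc]) (Set.toFinite _))
    rw [Set.symmDiff_def, Set.ncard_union_eq disjoint_sdiff_sdiff (Set.toFinite _) (Set.toFinite _)]
    have := h1.ncard_pos (Set.toFinite _)
    have := h2.ncard_pos (Set.toFinite _)
    omega

theorem stmt_19 {V : Type*} [Fintype V] (G : SimpleGraph V)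
    (hcubic : ∀ v : V, deg G v = 3) :
    ((∀ u v : V, ¬ ClosedTwins G u v) → ∃ S : Set V, IsRedIC G S) ∧
    ((∃ S : Set V, IsRedIC G S) ↔ ∃ S : Set V, IsIC G S) := by
  constructor
  · intro h
    exact ⟨Set.univ, univ_redIC G hcubic h⟩
  · constructor
    · rintro ⟨S, hdom, hdist⟩
      exact ⟨S, fun v => le_trans one_le_two (hdom v),
        fun u v huv => le_trans one_le_two (hdist u v huv)⟩
    · rintro ⟨S, hdom, hdist⟩
      refine ⟨Set.univ, univ_redIC G hcubic ?_⟩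
      rintro u v ⟨huv, hEq⟩
      have := hdist u v huv
      rw [kDistinguished, hEq, symmDiff_self] at this
      simp at this
end
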